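/- arXiv:1311.3143 — 11 statements merged into one kernel-verified Lean document; each statement's English description precedes it below -/
import Mathlib

section
/- Let R be a commutative ring, d ≥ 2, and let α_1,…,α_d be types. Let E_k : α_k → R for k = 1,…,d, let F : α_1 → R, and for each i = 2,…,d let A_i : α_{i-1} → R and B_i : α_i → R. Define the cascadic sum H : α_1 × ⋯ × α_d → R by H(x_1,…,x_d) = F(x_1)·∏_{k=2}^d E_k(x_k) + Σ_{i=2}^d (∏_{k=1}^{i-2} E_k(x_k))·A_i(x_{i-1})·B_i(x_i)·(∏_{k=i+1}^d E_k(x_k)). Define cores G_1(x_1) = [E_1(x_1), A_2(x_1), F(x_1)] (a 1×3 row matrix), G_i(x_i) = [[E_i(x_i), A_{i+1}(x_i), 0], [0, 0, B_i(x_i)], [0, 0, E_i(x_i)]] (a 3×3 matrix) for 2 ≤ i ≤ d−1, and G_d(x_d) = [0; B_d(x_d); E_d(x_d)] (a 3×1 column matrix). Then for all (x_1,…,x_d), H(x_1,…,x_d) equals the unique entry of the matrix product G_1(x_1)·G_2(x_2)⋯G_d(x_d). In particular, H admits a TT representation with all ranks equal to 3. -/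
/-!
Multiplying the cores from the left, the row vector after the first `i + 1` cores is
`(E₀ ⋯ Eᵢ, E₀ ⋯ Eᵢ₋₁ Aᵢ, Hᵢ)`, where `Hᵢ` is the cascadic sum in the first `i + 1` variables:
the next core multiplies every term of `Hᵢ` by `Eᵢ₊₁` and adds the pair term closed by `Bᵢ₊₁`.
The TT representation is this matrix product expanded as a sum over index paths, whose boundary
indices range over `Fin 1`.
-/

/-- `f` admits a tensor-train (TT) representation with ranks `r 0, …, r d`
(with `r 0 = r d = 1`): there are cores `G i` such that `f x` equals the `(0,0)`
entry of the matrix product `G 0 (x 0) * ⋯ * G (d-1) (x (d-1))`, written here as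
the sum over all index paths (the boundary indices range over `Fin 1`). -/
def IsTTRep {R : Type*} [CommRing R] {d : ℕ} {α : Fin d → Type*}
    (f : (∀ i, α i) → R) (r : Fin (d + 1) → ℕ) : Prop :=
  r 0 = 1 ∧ r (Fin.last d) = 1 ∧
    ∃ G : ∀ i : Fin d, α i → Matrix (Fin (r i.castSucc)) (Fin (r i.succ)) R,
      ∀ x : ∀ i, α i,
        f x = ∑ β : ∀ j : Fin (d + 1), Fin (r j),
                ∏ i : Fin d, G i (x i) (β i.castSucc) (β i.succ)

section

open Finset

variable {R : Type*} [CommRing R]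

theorem Matrix.mul_ofFn_prod_mul_apply {ι κ κ' : Type*} [Fintype ι] [DecidableEq ι] (m : ℕ)
    (L : Matrix κ ι R) (M : Fin m → Matrix ι ι R) (C : Matrix ι κ' R) (a : κ) (b : κ') :
    (L * (List.ofFn M).prod * C) a b =
      ∑ γ : Fin (m + 1) → ι,
        L a (γ 0) * (∏ i, M i (γ i.castSucc) (γ i.succ)) * C (γ (Fin.last m)) b := by
  induction m generalizing L with
  | zero =>
    rw [← (Equiv.funUnique (Fin 1) ι).symm.sum_comp]
    simp [Matrix.mul_apply]
  | succ m ih =>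
    rw [← (Fin.consEquiv fun _ => ι).sum_comp, Fintype.sum_prod_type, List.ofFn_succ,
      List.prod_cons, ← Matrix.mul_assoc L (M 0), ih, sum_comm]
    refine sum_congr rfl fun γ _ => ?_
    simp only [Fin.consEquiv_apply, Fin.prod_univ_succ, Fin.castSucc_zero, Fin.cons_zero,
      Matrix.mul_apply, sum_mul]
    refine sum_congr rfl fun p _ => ?_
    simp only [← Fin.succ_castSucc, ← Fin.succ_last, Fin.cons_succ]
    ring

theorem Fin.prod_filter_val_eq_prod_filter_range (N : ℕ) (p : ℕ → Prop) [DecidablePred p]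
    (e : ℕ → R) :
    ∏ k ∈ univ.filter (fun k : Fin N => p k), e k = ∏ k ∈ (range N).filter p, e k := by
  rw [prod_filter, prod_filter, Fin.prod_univ_eq_prod_range (fun k => if p k then e k else 1)]

theorem Fin.sum_pi_eq_sum_cons_snoc {k : ℕ} {τ : Fin (k + 3) → Type*} [∀ j, Fintype (τ j)]
    [Subsingleton (τ 0)] [Subsingleton (τ (Fin.last (k + 1)).succ)] (p : τ 0)
    (q : τ (Fin.last (k + 1)).succ) (Φ : (∀ j, τ j) → R) :
    ∑ β, Φ β = ∑ β : ∀ i : Fin (k + 1), τ i.castSucc.succ, Φ (Fin.cons p (Fin.snoc β q)) := by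
  rw [← (Fin.consEquiv _).sum_comp, Fintype.sum_prod_type, Fintype.sum_subsingleton _ p,
    ← (Fin.snocEquiv _).sum_comp, Fintype.sum_prod_type, Fintype.sum_subsingleton _ q]
  rfl

theorem Fin.prod_castSucc_succ_cons_snoc {k : ℕ} {τ : Fin (k + 3) → Type*}
    (H : ∀ i : Fin (k + 2), Matrix (τ i.castSucc) (τ i.succ) R) (p : τ 0)
    (β : ∀ i : Fin (k + 1), τ i.castSucc.succ) (q : τ (Fin.last (k + 1)).succ) :
    ∏ i, H i (Fin.cons p (Fin.snoc β q) i.castSucc) (Fin.cons p (Fin.snoc β q) i.succ) =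
      H 0 p (β 0) * (∏ i : Fin k, H i.castSucc.succ (β i.castSucc) (β i.succ)) *
        H (Fin.last k).succ (β (Fin.last k)) q := by
  rw [Fin.prod_univ_succ, Fin.prod_univ_castSucc, mul_assoc]
  have hβ (i : Fin (k + 1)) : Fin.snoc (α := fun i => τ i.succ) β q i.castSucc = β i :=
    Fin.snoc_castSucc ..
  refine congr_arg₂ (· * ·) (congrArg (H 0 p) (hβ 0)) (congr_arg₂ (· * ·) ?_ ?_)
  · exact prod_congr rfl fun i _ => congr_arg₂ (H _) (hβ i.castSucc) (hβ i.succ)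
  · exact congr_arg₂ (H _) (hβ (Fin.last k)) (Fin.snoc_last (α := fun i => τ i.succ) ..)

theorem isTTRep_of_eq_mul_ofFn_prod_mul {m N : ℕ} {α : Fin (m + 2) → Type*} (f : (∀ i, α i) → R)
    (r : Fin (m + 3) → ℕ) (h0 : r 0 = 1) (hlast : r (Fin.last (m + 2)) = 1)
    (hmid : ∀ i : Fin (m + 1), r i.succ.castSucc = N)
    (row : α 0 → Matrix (Fin 1) (Fin N) R)
    (mid : ∀ i : Fin m, α i.succ.castSucc → Matrix (Fin N) (Fin N) R)
    (col : α (Fin.last (m + 1)) → Matrix (Fin N) (Fin 1) R)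
    (hf : ∀ x, f x = (row (x 0) * (List.ofFn fun i => mid i (x i.succ.castSucc)).prod *
      col (x (Fin.last (m + 1)))) 0 0) :
    IsTTRep f r := by
  have hlast' : r (Fin.last (m + 1)).succ = 1 := hlast
  have : Subsingleton (Fin (r 0)) := by rw [h0]; infer_instance
  have : Subsingleton (Fin (r (Fin.last (m + 1)).succ)) := by rw [hlast']; infer_instance
  refine ⟨h0, hlast,
    Fin.cons (α := fun i => α i → Matrix (Fin (r i.castSucc)) (Fin (r i.succ)) R)
      (fun y => Matrix.of fun _ q => row y 0 (Fin.cast (hmid 0) q))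
      (Fin.snoc
        (fun i y => Matrix.of fun p q =>
          mid i y (Fin.cast (hmid i.castSucc) p) (Fin.cast (hmid i.succ) q))
        (fun y => Matrix.of fun p _ => col y (Fin.cast (hmid (Fin.last m)) p) 0)), fun x => ?_⟩
  rw [hf x, Matrix.mul_ofFn_prod_mul_apply,
    Fin.sum_pi_eq_sum_cons_snoc (Fin.cast h0.symm 0) (Fin.cast hlast'.symm 0)]
  refine Fintype.sum_equiv (Equiv.piCongrRight fun i => finCongr (hmid i)).symm _ _ fun γ => ?_
  rw [Fin.prod_castSucc_succ_cons_snoc]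
  simp only [Fin.cons_zero, Fin.cons_succ, Fin.snoc_castSucc, Fin.snoc_last,
    Equiv.piCongrRight_symm_apply, Pi.map_apply, finCongr_symm, finCongr_apply]
  rfl

-- The cascadic sum in the variables `0, …, N`, with the data indexed by `ℕ` so that `N` can vary.
def cascadicSum (e a b : ℕ → R) (f : R) (N : ℕ) : R :=
  f * ∏ k ∈ Ico 1 (N + 1), e k +
    ∑ j ∈ range N, (∏ k ∈ range j, e k) * a j * b j * ∏ k ∈ Ico (j + 2) (N + 1), e k

theorem cascadicSum_succ (e a b : ℕ → R) (f : R) (N : ℕ) :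
    cascadicSum e a b f (N + 1) =
      cascadicSum e a b f N * e (N + 1) + (∏ k ∈ range N, e k) * a N * b N := by
  have htail : ∀ j ∈ range N,
      (∏ k ∈ range j, e k) * a j * b j * ∏ k ∈ Ico (j + 2) (N + 1 + 1), e k =
        (∏ k ∈ range j, e k) * a j * b j * (∏ k ∈ Ico (j + 2) (N + 1), e k) * e (N + 1) :=
    fun j hj => by rw [prod_Ico_succ_top (by simp at hj; omega)]; ring
  rw [cascadicSum, cascadicSum, sum_range_succ, sum_congr rfl htail, ← sum_mul,
    prod_Ico_succ_top (by omega : 1 ≤ N + 1), Ico_self, prod_empty]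
  ring

theorem cascade_row_mul_ofFn_prod (e a b : ℕ → R) (f : R) (n : ℕ) :
    !![e 0, a 0, f] *
      (List.ofFn fun m : Fin n => !![e (m + 1), a (m + 1), 0; 0, 0, b m; 0, 0, e (m + 1)]).prod =
    !![∏ k ∈ range (n + 1), e k, (∏ k ∈ range n, e k) * a n, cascadicSum e a b f n] := by
  induction n with
  | zero => simp [cascadicSum]
  | succ n ih =>
    rw [List.ofFn_succ', List.prod_concat, ← Matrix.mul_assoc]
    simp only [Fin.val_castSucc, Fin.val_last, ih]
    ext i j
    fin_cases i
    fin_cases j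
    · simp [Matrix.mul_apply, Fin.sum_univ_succ, prod_range_succ]
    · simp [Matrix.mul_apply, Fin.sum_univ_succ]
    · simp [Matrix.mul_apply, Fin.sum_univ_succ, cascadicSum_succ, add_comm]

theorem cascadicSum_eq_mul_ofFn_prod_mul (e a b : ℕ → R) (f : R) (n : ℕ) :
    cascadicSum e a b f (n + 1) =
      (!![e 0, a 0, f] *
        (List.ofFn fun m : Fin n => !![e (m + 1), a (m + 1), 0; 0, 0, b m; 0, 0, e (m + 1)]).prod *
        !![0; b n; e (n + 1)]) 0 0 := by
  rw [cascade_row_mul_ofFn_prod, cascadicSum_succ]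
  simp [Matrix.mul_apply, Fin.sum_univ_succ, add_comm]

theorem fin_cascadic_sum_eq_mul_ofFn_prod_mul (n : ℕ) (α : Fin (n + 2) → Type*)
    (E : ∀ k : Fin (n + 2), α k → R) (F : α 0 → R)
    (A : ∀ j : Fin (n + 1), α j.castSucc → R)
    (B : ∀ j : Fin (n + 1), α j.succ → R) (x : ∀ i, α i) :
    F (x 0) * ∏ k ∈ univ.filter (fun k : Fin (n + 2) => 1 ≤ (k : ℕ)), E k (x k)
      + ∑ j : Fin (n + 1),
          (∏ k ∈ univ.filter (fun k : Fin (n + 2) => (k : ℕ) < (j : ℕ)), E k (x k))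
          * A j (x j.castSucc) * B j (x j.succ)
          * ∏ k ∈ univ.filter (fun k : Fin (n + 2) => (j : ℕ) + 1 < (k : ℕ)), E k (x k) =
    (!![E 0 (x 0), A 0 (x ((0 : Fin (n + 1)).castSucc)), F (x 0)] *
      (List.ofFn (fun m : Fin n =>
        !![E m.succ.castSucc (x m.succ.castSucc), A m.succ (x m.succ.castSucc), 0;
           0, 0, B m.castSucc (x m.castSucc.succ);
           0, 0, E m.succ.castSucc (x m.succ.castSucc)])).prod *
      !![(0 : R); B (Fin.last n) (x (Fin.last n).succ);
         E (Fin.last (n + 1)) (x (Fin.last (n + 1)))]) 0 0 := by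
  obtain ⟨e, he⟩ : ∃ e : ℕ → R, ∀ k : Fin (n + 2), E k (x k) = e k :=
    ⟨_, fun k => (Fin.val_injective.extend_apply (fun k => E k (x k)) 0 k).symm⟩
  obtain ⟨a, ha⟩ : ∃ a : ℕ → R, ∀ j : Fin (n + 1), A j (x j.castSucc) = a j :=
    ⟨_, fun j => (Fin.val_injective.extend_apply (fun j => A j (x j.castSucc)) 0 j).symm⟩
  obtain ⟨b, hb⟩ : ∃ b : ℕ → R, ∀ j : Fin (n + 1), B j (x j.succ) = b j :=
    ⟨_, fun j => (Fin.val_injective.extend_apply (fun j => B j (x j.succ)) 0 j).symm⟩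
  have hfilter (p : ℕ → Prop) [DecidablePred p] (s : Finset ℕ) (hs : (range (n + 2)).filter p = s) :
      ∏ k ∈ univ.filter (fun k : Fin (n + 2) => p k), E k (x k) = ∏ k ∈ s, e k := by
    simp only [he, Fin.prod_filter_val_eq_prod_filter_range, hs]
  convert cascadicSum_eq_mul_ofFn_prod_mul e a b (F (x 0)) n using 1
  · rw [cascadicSum, hfilter _ (Ico 1 (n + 2)) (by ext; simp; omega), ← Fin.sum_univ_eq_sum_range]
    refine congrArg _ (sum_congr rfl fun j _ => ?_)
    rw [hfilter (· < (j : ℕ)) (range j) (by ext; simp; omega),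
      hfilter ((j : ℕ) + 1 < ·) (Ico (j + 2) (n + 2)) (by ext; simp; omega), ha, hb]
  · simp only [he, ha, hb]
    rfl

end

/-- **Rank-3 TT decomposition of the cascadic sum** (Lemma 4.3 of the paper).
The dimension is `d = n + 2 ≥ 2`; positions are 0-based, and the pair terms
(indexed by `j : Fin (n+1)`) act on the adjacent positions `j.castSucc`, `j.succ`.
`H` equals the unique entry of the product of the explicit rank-3 cores, and in
particular admits a TT representation with all (interior) ranks equal to 3. -/
theorem cascadic_sum_rank_three {R : Type*} [CommRing R] (n : ℕ)
    (α : Fin (n + 2) → Type*)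
    (E : ∀ k : Fin (n + 2), α k → R) (F : α 0 → R)
    (A : ∀ j : Fin (n + 1), α j.castSucc → R)
    (B : ∀ j : Fin (n + 1), α j.succ → R)
    (H : (∀ i, α i) → R)
    (hH : ∀ x : ∀ i, α i,
      H x = F (x 0) *
              ∏ k ∈ Finset.univ.filter (fun k : Fin (n + 2) => 1 ≤ (k : ℕ)), E k (x k)
          + ∑ j : Fin (n + 1),
              (∏ k ∈ Finset.univ.filter (fun k : Fin (n + 2) => (k : ℕ) < (j : ℕ)), E k (x k))
              * A j (x j.castSucc) * B j (x j.succ)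
              * ∏ k ∈ Finset.univ.filter (fun k : Fin (n + 2) => (j : ℕ) + 1 < (k : ℕ)),
                  E k (x k)) :
    (∀ x : ∀ i, α i,
      H x = (!![E 0 (x 0), A 0 (x ((0 : Fin (n + 1)).castSucc)), F (x 0)] *
             (List.ofFn (fun m : Fin n =>
               !![E m.succ.castSucc (x m.succ.castSucc), A m.succ (x m.succ.castSucc), 0;
                  0, 0, B m.castSucc (x m.castSucc.succ);
                  0, 0, E m.succ.castSucc (x m.succ.castSucc)])).prod *
             !![(0 : R); B (Fin.last n) (x (Fin.last n).succ);
                E (Fin.last (n + 1)) (x (Fin.last (n + 1)))]) 0 0)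
    ∧ IsTTRep H (fun j : Fin (n + 3) => if (j : ℕ) = 0 ∨ (j : ℕ) = n + 2 then 1 else 3) := by
  have hprod := fun x => (hH x).trans (fin_cascadic_sum_eq_mul_ofFn_prod_mul n α E F A B x)
  refine ⟨hprod, isTTRep_of_eq_mul_ofFn_prod_mul H _ (by simp) (by simp) (fun i => ?_)
    (fun y => !![E 0 y, A 0 y, F y])
    (fun m y => !![E m.succ.castSucc y, A m.succ y, 0;
      0, 0, B m.castSucc y;
      0, 0, E m.succ.castSucc y])
    (fun y => !![0; B (Fin.last n) y; E (Fin.last (n + 1)) y]) hprod⟩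
  rw [if_neg (by simp only [Fin.val_castSucc, Fin.val_succ]; omega)]
end

section
/- Let K be a field, d ≥ 2, and let α_1,…,α_d be finite types. Let E_k : α_k → K for k = 1,…,d, let F : α_1 → K, and for each i = 2,…,d let A_i : α_{i-1} → K and B_i : α_i → K. Define the cascadic sum H : α_1 × ⋯ × α_d → K by H(x_1,…,x_d) = F(x_1)·∏_{k=2}^d E_k(x_k) + Σ_{i=2}^d (∏_{k=1}^{i-2} E_k(x_k))·A_i(x_{i-1})·B_i(x_i)·(∏_{k=i+1}^d E_k(x_k)). Then for every i ∈ {1,…,d}, the mode-i matricization of H — the matrix with rows indexed by α_i, columns indexed by ∏_{k≠i} α_k, and entry H(x_1,…,x_d) at position (x_i, (x_k)_{k≠i}) — has rank at most 3. (This is the Tucker rank-3 bound for the cascadic sum.) -/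
/-!
Each of the `n + 2` summands of the cascadic sum is a pure tensor `∏ k, φ k (x k)`, and a pure
tensor's mode-`i` matricization has every column proportional to its mode-`i` factor `φ i`.
Hence every column of the mode-`i` matricization of the sum lies in the span of the mode-`i`
factors of the summands. Indexing the summands by `t : Fin (n + 2)`, with summand `t + 1` the
pair term on positions `t, t + 1`, only the summands `i` and `i + 1` have a mode-`i` factor
other than `E i`, so that span has dimension at most 3.
-/

open scoped BigOperators

/-- The mode-`i` matricization of `f : α 1 × ⋯ × α d → K`: the matrix whose rows
are indexed by `α i`, whose columns are indexed by the product of the remaining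
factors `α k` (`k ≠ i`), and whose `(a, y)` entry is the value of `f` at the
point assembled from `a` and `y`. -/
def modeMatricization {K : Type*} [Field K] {d : ℕ} {α : Fin d → Type*}
    (f : (∀ i, α i) → K) (i : Fin d) :
    Matrix (α i) (∀ k : {k : Fin d // k ≠ i}, α k.val) K :=
  fun a y => f (fun k => if h : k = i then cast (congrArg α h.symm) a else y ⟨k, h⟩)

open Finset Function

theorem Matrix.rank_le_card_of_col_mem_span {K m n κ : Type*} [Field K] [Fintype n] [Fintype κ]
    (M : Matrix m n K) (u : κ → m → K) (h : ∀ y, M.col y ∈ Submodule.span K (Set.range u)) :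
    M.rank ≤ Fintype.card κ := by
  have := FiniteDimensional.span_of_finite K (Set.finite_range u)
  rw [Matrix.rank_eq_finrank_span_cols]
  calc Module.finrank K (Submodule.span K (Set.range M.col))
      ≤ Set.finrank K (Set.range u) :=
        Submodule.finrank_mono (Submodule.span_le.2 (Set.range_subset_iff.2 h))
    _ ≤ Fintype.card κ := finrank_range_le_card u

section ModeMatricization

variable {K : Type*} [Field K] {d : ℕ} {α : Fin d → Type*}

theorem modeMatricization_prod_apply (φ : ∀ k, α k → K) (i : Fin d) (a : α i)
    (y : ∀ k : {k : Fin d // k ≠ i}, α k.val) :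
    modeMatricization (fun x => ∏ k, φ k (x k)) i a y = φ i a * ∏ k, φ k.1 (y k) := by
  simp only [modeMatricization, Fintype.prod_eq_mul_prod_subtype_ne _ i, dif_pos, cast_eq]
  congr 1
  exact prod_congr rfl fun k _ => by rw [dif_neg k.2]

theorem rank_modeMatricization_sum_prod_le [∀ i, Fintype (α i)] {ι κ : Type*} [Fintype ι]
    [Fintype κ] (φ : ι → ∀ k, α k → K) (i : Fin d) (u : κ → α i → K)
    (hφ : ∀ t, φ t i ∈ Set.range u) :
    (modeMatricization (fun x => ∑ t, ∏ k, φ t k (x k)) i).rank ≤ Fintype.card κ := by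
  refine Matrix.rank_le_card_of_col_mem_span _ u fun y => ?_
  have hcol : (modeMatricization (fun x => ∑ t, ∏ k, φ t k (x k)) i).col y =
      ∑ t, (∏ k, φ t k.1 (y k)) • φ t i := by
    ext a
    change ∑ t, modeMatricization (fun x => ∏ k, φ t k (x k)) i a y = _
    simp [modeMatricization_prod_apply, mul_comm]
  rw [hcol]
  exact Submodule.sum_mem _ fun t _ =>
    Submodule.smul_mem _ _ (Submodule.subset_span (hφ t))

end ModeMatricization

theorem Finset.prod_update_apply {ι M : Type*} [DecidableEq ι] [CommMonoid M] {β : ι → Type*}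
    (f : ∀ k, β k → M) (p : ι) (g : β p → M) (x : ∀ k, β k) {s : Finset ι} (hp : p ∈ s) :
    ∏ k ∈ s, update f p g k (x k) = g (x p) * ∏ k ∈ s.erase p, f k (x k) := by
  rw [← mul_prod_erase s _ hp, update_self]
  congr 1
  exact prod_congr rfl fun k hk => by rw [update_of_ne (ne_of_mem_erase hk)]

section Cascadic

variable {K : Type*} {n : ℕ} {α : Fin (n + 2) → Type*}
  (E : ∀ k, α k → K) (F : α 0 → K)
  (A : ∀ j : Fin (n + 1), α j.castSucc → K) (B : ∀ j : Fin (n + 1), α j.succ → K)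

def cascadicFactor : Fin (n + 2) → ∀ k, α k → K :=
  Fin.cases (update E 0 F) fun j => update (update E j.castSucc (A j)) j.succ (B j)

theorem cascadicFactor_apply_of_ne {t i : Fin (n + 2)} (hti : t ≠ i) (hti' : t ≠ i + 1) :
    cascadicFactor E F A B t i = E i := by
  cases t using Fin.cases with
  | zero => exact update_of_ne (Ne.symm hti) _ _
  | succ j =>
    have hij : i ≠ j.castSucc := by
      rintro rfl
      exact hti' Fin.coeSucc_eq_succ.symm
    simp [cascadicFactor, update_of_ne (Ne.symm hti), update_of_ne hij]

theorem prod_cascadicFactor_zero [CommMonoid K] (x : ∀ k, α k) :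
    ∏ k, cascadicFactor E F A B 0 k (x k) =
      F (x 0) * ∏ k ∈ univ.filter (fun k : Fin (n + 2) => 1 ≤ (k : ℕ)), E k (x k) := by
  have herase : univ.erase 0 = univ.filter (fun k : Fin (n + 2) => 1 ≤ (k : ℕ)) := by
    ext k
    simp only [mem_erase, mem_filter, mem_univ, true_and, ne_eq, Fin.ext_iff, Fin.val_zero,
      and_true]
    omega
  rw [cascadicFactor, Fin.cases_zero, prod_update_apply _ _ _ _ (mem_univ 0), herase]

theorem prod_cascadicFactor_succ [CommMonoid K] (j : Fin (n + 1)) (x : ∀ k, α k) :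
    ∏ k, cascadicFactor E F A B j.succ k (x k) =
      (∏ k ∈ univ.filter (fun k : Fin (n + 2) => (k : ℕ) < (j : ℕ)), E k (x k))
        * A j (x j.castSucc) * B j (x j.succ)
        * ∏ k ∈ univ.filter (fun k : Fin (n + 2) => (j : ℕ) + 1 < (k : ℕ)), E k (x k) := by
  have hcast : j.castSucc ∈ univ.erase j.succ :=
    mem_erase.2 ⟨Fin.castSucc_lt_succ.ne, mem_univ _⟩
  have herase : (univ.erase j.succ).erase j.castSucc =
      univ.filter (fun k : Fin (n + 2) => (k : ℕ) < (j : ℕ)) ∪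
        univ.filter (fun k : Fin (n + 2) => (j : ℕ) + 1 < (k : ℕ)) := by
    ext k
    simp only [mem_erase, mem_union, mem_filter, mem_univ, true_and, ne_eq, Fin.ext_iff,
      Fin.val_succ, Fin.val_castSucc, and_true]
    omega
  have hdisj : Disjoint (univ.filter (fun k : Fin (n + 2) => (k : ℕ) < (j : ℕ)))
      (univ.filter (fun k : Fin (n + 2) => (j : ℕ) + 1 < (k : ℕ))) :=
    disjoint_filter.2 fun k _ hk hk' => by omega
  rw [cascadicFactor, Fin.cases_succ, prod_update_apply _ _ _ _ (mem_univ _),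
    prod_update_apply _ _ _ _ hcast, herase, prod_union hdisj]
  ac_rfl

theorem cascadic_sum_eq_sum_prod_cascadicFactor [CommSemiring K] (x : ∀ k, α k) :
    F (x 0) * ∏ k ∈ univ.filter (fun k : Fin (n + 2) => 1 ≤ (k : ℕ)), E k (x k)
      + ∑ j : Fin (n + 1),
          (∏ k ∈ univ.filter (fun k : Fin (n + 2) => (k : ℕ) < (j : ℕ)), E k (x k))
            * A j (x j.castSucc) * B j (x j.succ)
            * ∏ k ∈ univ.filter (fun k : Fin (n + 2) => (j : ℕ) + 1 < (k : ℕ)), E k (x k) =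
      ∑ t, ∏ k, cascadicFactor E F A B t k (x k) := by
  simp only [Fin.sum_univ_succ (n := n + 1), prod_cascadicFactor_zero, prod_cascadicFactor_succ]

end Cascadic

/-- **Tucker rank-3 bound for the cascadic sum** (Lemma 4.3 of the paper).
The dimension is `d = n + 2 ≥ 2`; positions are 0-based, and the pair terms
(indexed by `j : Fin (n+1)`) act on the adjacent positions `j.castSucc`, `j.succ`.
Every mode-`i` matricization of the cascadic sum `H` has rank at most 3. -/
theorem cascadic_sum_tucker_rank_le_three {K : Type*} [Field K] (n : ℕ)
    (α : Fin (n + 2) → Type*) [∀ i, Fintype (α i)]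
    (E : ∀ k : Fin (n + 2), α k → K) (F : α 0 → K)
    (A : ∀ j : Fin (n + 1), α j.castSucc → K)
    (B : ∀ j : Fin (n + 1), α j.succ → K)
    (H : (∀ i, α i) → K)
    (hH : ∀ x : ∀ i, α i,
      H x = F (x 0) *
              ∏ k ∈ Finset.univ.filter (fun k : Fin (n + 2) => 1 ≤ (k : ℕ)), E k (x k)
          + ∑ j : Fin (n + 1),
              (∏ k ∈ Finset.univ.filter (fun k : Fin (n + 2) => (k : ℕ) < (j : ℕ)), E k (x k))
              * A j (x j.castSucc) * B j (x j.succ)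
              * ∏ k ∈ Finset.univ.filter (fun k : Fin (n + 2) => (j : ℕ) + 1 < (k : ℕ)),
                  E k (x k)) :
    ∀ i : Fin (n + 2), (modeMatricization H i).rank ≤ 3 := by
  intro i
  obtain rfl : H = fun x => ∑ t, ∏ k, cascadicFactor E F A B t k (x k) :=
    funext fun x => (hH x).trans (cascadic_sum_eq_sum_prod_cascadicFactor E F A B x)
  refine (rank_modeMatricization_sum_prod_le _ i
    ![cascadicFactor E F A B i i, cascadicFactor E F A B (i + 1) i, E i] fun t => ?_).trans
    (by simp)
  by_cases hti : t = i
  · exact ⟨0, by simp [hti]⟩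
  by_cases hti' : t = i + 1
  · exact ⟨1, by simp [hti']⟩
  exact ⟨2, by simp [cascadicFactor_apply_of_ne E F A B hti hti']⟩
end

section
/- Let d ≥ 2 and let j_x, j_y, j_z, λ ∈ ℂ. Let P_x = [[0,1],[1,0]], P_y = [[0,−i],[i,0]], P_z = [[1,0],[0,−1]] be the Pauli matrices in Matrix (Fin 2) (Fin 2) ℂ, and let I denote the 2×2 identity. Define the Heisenberg (XYZ) Hamiltonian entrywise as the function h : (Fin 2 × Fin 2)^d → ℂ given by h((x_1,x'_1),…,(x_d,x'_d)) = Σ_{μ∈{x,y,z}} j_μ · Σ_{i=2}^d (∏_{k=1}^{i-2} I(x_k,x'_k)) · P_μ(x_{i-1},x'_{i-1}) · P_μ(x_i,x'_i) · (∏_{k=i+1}^d I(x_k,x'_k)) + λ · Σ_{i=1}^d (∏_{k=1}^{i-1} I(x_k,x'_k)) · P_x(x_i,x'_i) · (∏_{k=i+1}^d I(x_k,x'_k)). Then h admits a TT representation with all ranks at most 7. -/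
open scoped BigOperators

noncomputable def pauliX : Matrix (Fin 2) (Fin 2) ℂ := !![0, 1; 1, 0]
noncomputable def pauliY : Matrix (Fin 2) (Fin 2) ℂ := !![0, -Complex.I; Complex.I, 0]
noncomputable def pauliZ : Matrix (Fin 2) (Fin 2) ℂ := !![1, 0; 0, -1]

/-- The nearest-neighbour interaction sum
`Σ_{i=2}^d I ⊗ ⋯ ⊗ P ⊗ P ⊗ ⋯ ⊗ I`, written entrywise on the grouped index
`x : Fin (n+2) → Fin 2 × Fin 2` (0-based: the pair indexed by `m : Fin (n+1)`
acts on positions `m.castSucc`, `m.succ`). -/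
noncomputable def nnSum (n : ℕ) (P : Matrix (Fin 2) (Fin 2) ℂ)
    (x : Fin (n + 2) → Fin 2 × Fin 2) : ℂ :=
  ∑ m : Fin (n + 1),
    (∏ k ∈ Finset.univ.filter (fun k : Fin (n + 2) => (k : ℕ) < (m : ℕ)),
        (1 : Matrix (Fin 2) (Fin 2) ℂ) (x k).1 (x k).2)
    * P (x m.castSucc).1 (x m.castSucc).2 * P (x m.succ).1 (x m.succ).2
    * ∏ k ∈ Finset.univ.filter (fun k : Fin (n + 2) => (m : ℕ) + 1 < (k : ℕ)),
        (1 : Matrix (Fin 2) (Fin 2) ℂ) (x k).1 (x k).2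

/-- The one-site sum `Σ_{i=1}^d I ⊗ ⋯ ⊗ P ⊗ ⋯ ⊗ I`, entrywise on the grouped
index `x : Fin (n+2) → Fin 2 × Fin 2`. -/
noncomputable def siteSum (n : ℕ) (P : Matrix (Fin 2) (Fin 2) ℂ)
    (x : Fin (n + 2) → Fin 2 × Fin 2) : ℂ :=
  ∑ i : Fin (n + 2),
    (∏ k ∈ Finset.univ.filter (fun k : Fin (n + 2) => (k : ℕ) < (i : ℕ)),
        (1 : Matrix (Fin 2) (Fin 2) ℂ) (x k).1 (x k).2)
    * P (x i).1 (x i).2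
    * ∏ k ∈ Finset.univ.filter (fun k : Fin (n + 2) => (i : ℕ) < (k : ℕ)),
        (1 : Matrix (Fin 2) (Fin 2) ℂ) (x k).1 (x k).2

/-!
The Hamiltonian is the `(4, 0)` entry of the product `W(x₁) ⋯ W(x_d)` of the 5 × 5 matrix
product operator `W = xyzMPO`, a finite-state automaton that places the identity on every site
except for one field term `λ X` or one nearest-neighbour pair `j_μ P_μ ⊗ P_μ`. Any fixed entry
of a product of `D × D` matrices has a TT representation with ranks `1, D, …, D, 1`: the
boundary cores are the corresponding row and column of the first and last matrix. Hence ranks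
`5 ≤ 7` suffice.
-/

open Finset

theorem Matrix.list_prod_ofFn_apply {R n : Type*} [CommSemiring R] [Fintype n] [DecidableEq n] :
    ∀ {d : ℕ} (M : Fin d → Matrix n n R) (a b : n),
      (List.ofFn M).prod a b = ∑ γ : Fin (d + 1) → n,
        if γ 0 = a ∧ γ (Fin.last d) = b then ∏ i, M i (γ i.castSucc) (γ i.succ) else 0
  | 0, M, a, b => by
    rw [← (Equiv.funUnique (Fin 1) n).symm.sum_comp]
    simp [Matrix.one_apply, ite_and]
  | d + 1, M, a, b => by
    rw [List.ofFn_succ', List.prod_concat, Matrix.mul_apply, ← (Fin.snocEquiv _).sum_comp,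
      Fintype.sum_prod_type, sum_comm]
    simp only [Matrix.list_prod_ofFn_apply, sum_mul, ite_mul, zero_mul]
    rw [sum_comm]
    refine sum_congr rfl fun γ _ => ?_
    simp [Fin.snocEquiv, Fin.prod_univ_castSucc, ← Fin.castSucc_succ, ite_and]

theorem List.ofFn_eq_map_range {α : Type*} (N : ℕ) (f : ℕ → α) :
    List.ofFn (fun i : Fin N => f i) = (List.range N).map f := by
  rw [List.ofFn_eq_map, ← List.map_coe_finRange_eq_range, List.map_map]
  rfl

def bondRanks (d D : ℕ) (j : Fin (d + 1)) : ℕ := if j = 0 ∨ j = Fin.last d then 1 else D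

section BondIndex

variable {d D : ℕ}

/-- Reads an index of bond `j` for the ranks `bondRanks d D` as an index of the `D × D` chain,
pinning the two rank-one boundary bonds to `a` and `b`. -/
def bondIndex (a b : Fin D) (j : Fin (d + 1)) (k : Fin (bondRanks d D j)) : Fin D :=
  if h₀ : j = 0 then a else if hₗ : j = Fin.last d then b
  else ⟨k, by simpa [bondRanks, h₀, hₗ] using k.isLt⟩

theorem sum_bondIndex {M : Type*} [AddCommMonoid M] (hd : 0 < d) (a b : Fin D)
    (g : (Fin (d + 1) → Fin D) → M) :
    ∑ β : ∀ j, Fin (bondRanks d D j), g (fun j => bondIndex a b j (β j))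
      = ∑ γ : Fin (d + 1) → Fin D, if γ 0 = a ∧ γ (Fin.last d) = b then g γ else 0 := by
  have hl : Fin.last d ≠ 0 := Fin.ext_iff.not.2 (Nat.pos_iff_ne_zero.1 hd)
  rw [← sum_filter]
  refine sum_nbij' (fun β j => bondIndex a b j (β j))
    (fun γ j => if h : j = 0 ∨ j = Fin.last d then ⟨0, by simp [bondRanks, h]⟩
      else ⟨γ j, by simp [bondRanks, h]⟩) ?mapsTo (by simp) ?leftInv ?rightInv (fun _ _ => rfl)
  case mapsTo =>
    intro β _
    simp [bondIndex, hl]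
  case leftInv =>
    intro β _
    funext j
    by_cases h : j = 0 ∨ j = Fin.last d
    · have : bondRanks d D j = 1 := if_pos h
      rw [dif_pos h]
      exact Fin.ext (by have := (β j).isLt; omega)
    · rw [not_or] at h
      simp [h, bondIndex]
  case rightInv =>
    intro γ hγ
    rw [mem_filter] at hγ
    funext j
    by_cases h₀ : j = 0
    · simp [bondIndex, h₀, hγ.2.1]
    by_cases hₗ : j = Fin.last d
    · simp [bondIndex, hₗ, hγ.2.2, hl]
    · simp [bondIndex, h₀, hₗ]

theorem isTTRep_of_eq_prod_apply {R : Type*} [CommRing R] {α : Fin d → Type*} (hd : 0 < d)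
    (f : (∀ i, α i) → R) (W : ∀ i, α i → Matrix (Fin D) (Fin D) R) (a b : Fin D)
    (hf : ∀ x, f x = (List.ofFn fun i => W i (x i)).prod a b) :
    IsTTRep f (bondRanks d D) := by
  refine ⟨if_pos (Or.inl rfl), if_pos (Or.inr rfl),
    fun i p u v => W i p (bondIndex a b _ u) (bondIndex a b _ v), fun x => ?_⟩
  rw [hf, Matrix.list_prod_ofFn_apply, ← sum_bondIndex hd a b]

end BondIndex

theorem Fin.prod_filter_eq_prod_range_filter {M : Type*} [CommMonoid M] (N : ℕ) (p : ℕ → Prop)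
    [DecidablePred p] (g : ℕ → M) :
    ∏ k ∈ univ.filter (fun k : Fin N => p k), g k = ∏ k ∈ (range N).filter p, g k := by
  rw [prod_filter, Fin.prod_univ_eq_prod_range (fun k => if p k then g k else 1), ← prod_filter]

theorem Fin.prod_filter_val_lt {M : Type*} [CommMonoid M] {N m : ℕ} (h : m ≤ N)
    (g : ℕ → M) :
    ∏ k ∈ univ.filter (fun k : Fin N => (k : ℕ) < m), g k = ∏ k ∈ Ico 0 m, g k := by
  rw [Fin.prod_filter_eq_prod_range_filter N (· < m)]
  congr 1
  ext k
  simp only [mem_filter, mem_range, mem_Ico]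
  omega

theorem Fin.prod_filter_lt_val {M : Type*} [CommMonoid M] (N m : ℕ) (g : ℕ → M) :
    ∏ k ∈ univ.filter (fun k : Fin N => m < (k : ℕ)), g k = ∏ k ∈ Ico (m + 1) N, g k := by
  rw [Fin.prod_filter_eq_prod_range_filter N (m < ·)]
  congr 1
  ext k
  simp only [mem_filter, mem_range, mem_Ico]
  omega

section Chain

/- Configurations are extended from `Fin d` to `ℕ`, so that chains of every length `s` share
one index type and can be treated by induction on `s`. -/

noncomputable def idProd (y : ℕ → Fin 2 × Fin 2) (i j : ℕ) : ℂ :=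
  ∏ k ∈ Ico i j, (1 : Matrix (Fin 2) (Fin 2) ℂ) (y k).1 (y k).2

noncomputable def nnSumNat (P : Matrix (Fin 2) (Fin 2) ℂ) (y : ℕ → Fin 2 × Fin 2) (s : ℕ) :
    ℂ :=
  ∑ i ∈ range (s - 1),
    idProd y 0 i * P (y i).1 (y i).2 * P (y (i + 1)).1 (y (i + 1)).2 * idProd y (i + 2) s

noncomputable def siteSumNat (P : Matrix (Fin 2) (Fin 2) ℂ) (y : ℕ → Fin 2 × Fin 2) (s : ℕ) :
    ℂ :=
  ∑ i ∈ range s, idProd y 0 i * P (y i).1 (y i).2 * idProd y (i + 1) s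

variable (P : Matrix (Fin 2) (Fin 2) ℂ) (y : ℕ → Fin 2 × Fin 2)

theorem idProd_succ {i j : ℕ} (h : i ≤ j) :
    idProd y i (j + 1) = idProd y i j * (1 : Matrix (Fin 2) (Fin 2) ℂ) (y j).1 (y j).2 :=
  prod_Ico_succ_top h _

theorem nnSumNat_succ_succ (s : ℕ) :
    nnSumNat P y (s + 2) =
      nnSumNat P y (s + 1) * (1 : Matrix (Fin 2) (Fin 2) ℂ) (y (s + 1)).1 (y (s + 1)).2
        + idProd y 0 s * P (y s).1 (y s).2 * P (y (s + 1)).1 (y (s + 1)).2 := by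
  rw [nnSumNat, nnSumNat, show s + 2 - 1 = s + 1 from rfl, Nat.add_sub_cancel, sum_range_succ,
    sum_mul]
  congr 1
  · refine sum_congr rfl fun i hi => ?_
    rw [idProd_succ y (by rw [mem_range] at hi; omega)]
    ring
  · simp [idProd]

theorem siteSumNat_succ (s : ℕ) :
    siteSumNat P y (s + 1) =
      siteSumNat P y s * (1 : Matrix (Fin 2) (Fin 2) ℂ) (y s).1 (y s).2
        + idProd y 0 s * P (y s).1 (y s).2 := by
  rw [siteSumNat, siteSumNat, sum_range_succ, sum_mul]
  congr 1
  · refine sum_congr rfl fun i hi => ?_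
    rw [idProd_succ y (by rw [mem_range] at hi; omega)]
    ring
  · simp [idProd]

theorem nnSum_eq_nnSumNat (n : ℕ) : nnSum n P (fun k => y k) = nnSumNat P y (n + 2) := by
  rw [nnSum, nnSumNat, show n + 2 - 1 = n + 1 from rfl, ← Fin.sum_univ_eq_sum_range]
  refine sum_congr rfl fun m _ => ?_
  rw [Fin.prod_filter_val_lt (by omega) fun k => (1 : Matrix (Fin 2) (Fin 2) ℂ) (y k).1 (y k).2,
    Fin.prod_filter_lt_val _ _ fun k => (1 : Matrix (Fin 2) (Fin 2) ℂ) (y k).1 (y k).2]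
  rfl

theorem siteSum_eq_siteSumNat (n : ℕ) : siteSum n P (fun k => y k) = siteSumNat P y (n + 2) := by
  rw [siteSum, siteSumNat, ← Fin.sum_univ_eq_sum_range]
  refine sum_congr rfl fun m _ => ?_
  rw [Fin.prod_filter_val_lt m.is_lt.le fun k => (1 : Matrix (Fin 2) (Fin 2) ℂ) (y k).1 (y k).2,
    Fin.prod_filter_lt_val _ _ fun k => (1 : Matrix (Fin 2) (Fin 2) ℂ) (y k).1 (y k).2]
  rfl

end Chain

section XYZMPO

variable (jx jy jz lam : ℂ)

noncomputable def xyzHamiltonianNat (y : ℕ → Fin 2 × Fin 2) (s : ℕ) : ℂ :=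
  jx * nnSumNat pauliX y s + jy * nnSumNat pauliY y s + jz * nnSumNat pauliZ y s
    + lam * siteSumNat pauliX y s

/-- Read from state `4` to state `0`, the automaton idles in `4` (factor `I`), then either
emits the field term `λ X` or emits `j_μ P_μ` and passes through state `μ` to emit `P_μ`
on the next site, then idles in `0`. -/
noncomputable def xyzMPO (p : Fin 2 × Fin 2) : Matrix (Fin 5) (Fin 5) ℂ :=
  let e : Matrix (Fin 2) (Fin 2) ℂ → ℂ := fun M => M p.1 p.2
  !![e 1, 0, 0, 0, 0;
     e pauliX, 0, 0, 0, 0;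
     e pauliY, 0, 0, 0, 0;
     e pauliZ, 0, 0, 0, 0;
     lam * e pauliX, jx * e pauliX, jy * e pauliY, jz * e pauliZ, e 1]

theorem xyzMPO_prod_row (y : ℕ → Fin 2 × Fin 2) (s : ℕ) :
    ((List.range (s + 1)).map fun k => xyzMPO jx jy jz lam (y k)).prod 4 =
      ![xyzHamiltonianNat jx jy jz lam y (s + 1),
        jx * (idProd y 0 s * pauliX (y s).1 (y s).2),
        jy * (idProd y 0 s * pauliY (y s).1 (y s).2),
        jz * (idProd y 0 s * pauliZ (y s).1 (y s).2),
        idProd y 0 (s + 1)] := by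
  induction s with
  | zero =>
    funext b
    fin_cases b <;> simp [xyzMPO, xyzHamiltonianNat, nnSumNat, siteSumNat, idProd]
  | succ s ih =>
    funext b
    rw [List.range_succ, List.map_append, List.prod_append, List.map_singleton,
      List.prod_singleton, Matrix.mul_apply, ih, Fin.sum_univ_five]
    fin_cases b <;>
      simp [xyzMPO, xyzHamiltonianNat, nnSumNat_succ_succ, siteSumNat_succ, idProd_succ] <;> ring

/-- **The Heisenberg (XYZ) Hamiltonian admits a rank-7 TT representation**
(Lemma 4.5 of the paper). The number of spins is `d = n + 2 ≥ 2`. -/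
theorem heisenberg_XYZ_tt_rank_le_seven (n : ℕ) (jx jy jz lam : ℂ) :
    ∃ r : Fin (n + 3) → ℕ, (∀ j, r j ≤ 7) ∧
      IsTTRep (fun x : Fin (n + 2) → Fin 2 × Fin 2 =>
        jx * nnSum n pauliX x + jy * nnSum n pauliY x + jz * nnSum n pauliZ x
          + lam * siteSum n pauliX x) r := by
  refine ⟨bondRanks (n + 2) 5, fun j => ?_, isTTRep_of_eq_prod_apply (by omega) _
    (fun _ => xyzMPO jx jy jz lam) 4 0 fun x => ?_⟩
  · unfold bondRanks
    split_ifs <;> omega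
  · obtain ⟨y, rfl⟩ : ∃ y : ℕ → Fin 2 × Fin 2, (fun i : Fin (n + 2) => y i) = x :=
      ⟨fun k => if h : k < n + 2 then x ⟨k, h⟩ else x 0, funext fun i => dif_pos i.is_lt⟩
    rw [nnSum_eq_nnSumNat, nnSum_eq_nnSumNat, nnSum_eq_nnSumNat, siteSum_eq_siteSumNat,
      List.ofFn_eq_map_range _ (fun k => xyzMPO jx jy jz lam (y k)), xyzMPO_prod_row]
    rfl
end XYZMPO
end

section
/- Let d ≥ 2 and let j_x, j_y, λ ∈ ℂ. Let P_x = [[0,1],[1,0]], P_y = [[0,−i],[i,0]] be Pauli matrices in Matrix (Fin 2) (Fin 2) ℂ, and let I denote the 2×2 identity. Define the Heisenberg (XY) Hamiltonian entrywise as h : (Fin 2 × Fin 2)^d → ℂ, h((x_1,x'_1),…,(x_d,x'_d)) = Σ_{μ∈{x,y}} j_μ · Σ_{i=2}^d (∏_{k=1}^{i-2} I(x_k,x'_k)) · P_μ(x_{i-1},x'_{i-1}) · P_μ(x_i,x'_i) · (∏_{k=i+1}^d I(x_k,x'_k)) + λ · Σ_{i=1}^d (∏_{k=1}^{i-1} I(x_k,x'_k))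 · P_x(x_i,x'_i) · (∏_{k=i+1}^d I(x_k,x'_k)). Then h admits a TT representation with all ranks at most 6. -/
open scoped BigOperators

/-!
The Hamiltonian is generated by a four-state automaton reading the sites from left to right:
state `0` means "only identities so far", states `1` and `2` mean "a `P` (resp. `Q`) was just
placed and its partner must come next", and state `3` means "the term is complete, only
identities follow". With the transfer matrix `W(x)` of this automaton (`xyCore`), the value
`h(x)` is the `(0, 3)` entry of `W(x₁) ⋯ W(x_d)`, computed together with the rest of column `3`
by peeling off the first site. Finally, a fixed entry of a product of `N × N` matrices is a sum
over index paths with pinned endpoints, i.e. a TT representation with ranks `(1, N, …, N, 1)`.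
-/

open Finset Matrix

section PathSum

variable {R : Type*} [CommSemiring R] {N : ℕ}

theorem dotProduct_list_ofFn_prod_mulVec :
    ∀ {d : ℕ} (M : Fin d → Matrix (Fin N) (Fin N) R) (u v : Fin N → R),
      u ⬝ᵥ ((List.ofFn M).prod *ᵥ v)
        = ∑ γ : Fin (d + 1) → Fin N,
            u (γ 0) * (∏ i, M i (γ i.castSucc) (γ i.succ)) * v (γ (Fin.last d))
  | 0, M, u, v => by
    rw [← (Equiv.funUnique (Fin 1) (Fin N)).symm.sum_comp]
    simp [dotProduct]
  | d + 1, M, u, v => by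
    rw [List.ofFn_succ, List.prod_cons, ← mulVec_mulVec, dotProduct_mulVec,
      dotProduct_list_ofFn_prod_mulVec]
    conv_rhs => rw [← (Fin.consEquiv fun _ => Fin N).sum_comp, Fintype.sum_prod_type,
      Finset.sum_comm]
    refine Finset.sum_congr rfl fun γ _ => ?_
    simp only [Fin.consEquiv_apply, Fin.prod_univ_succ, vecMul, dotProduct, Finset.sum_mul,
      Fin.cons_zero, Fin.cons_succ, Fin.castSucc_zero, ← Fin.succ_castSucc, ← Fin.succ_last]
    exact Finset.sum_congr rfl fun a _ => by ring

theorem list_ofFn_prod_apply {d : ℕ} (M : Fin d → Matrix (Fin N) (Fin N) R) (s t : Fin N) :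
    (List.ofFn M).prod s t
      = ∑ γ : Fin (d + 1) → Fin N with γ 0 = s ∧ γ (Fin.last d) = t,
          ∏ i, M i (γ i.castSucc) (γ i.succ) := by
  have h := dotProduct_list_ofFn_prod_mulVec M (Pi.single s 1) (Pi.single t 1)
  rw [Finset.sum_filter]
  simpa [Pi.single_apply, ← ite_and, and_comm, eq_comm] using h

end PathSum

section UniformRanks

variable {N d : ℕ}

def uniformTTRanks (d N : ℕ) (j : Fin (d + 1)) : ℕ :=
  if j = 0 ∨ j = Fin.last d then 1 else N

lemma uniformTTRanks_pos (hN : 0 < N) (j : Fin (d + 1)) : 0 < uniformTTRanks d N j := by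
  unfold uniformTTRanks; split_ifs <;> omega

/-- Boundary bonds carry the fixed states `s` and `t`; on interior bonds `b < N` already, and
`% N` only makes this visible to the type checker. -/
def bondState (s t : Fin N) (j : Fin (d + 1)) (b : Fin (uniformTTRanks d N j)) : Fin N :=
  if j = 0 then s else if j = Fin.last d then t else ⟨b % N, Nat.mod_lt _ s.pos⟩

lemma val_bondState_mod (s t : Fin N) (j : Fin (d + 1)) (b : Fin (uniformTTRanks d N j)) :
    (bondState s t j b : ℕ) % uniformTTRanks d N j = b := by
  have hb := b.isLt
  unfold bondState
  by_cases hj : j = 0 ∨ j = Fin.last d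
  · have hr : uniformTTRanks d N j = 1 := if_pos hj
    have hmod (m : ℕ) : m % uniformTTRanks d N j = 0 := by rw [hr, Nat.mod_one]
    rw [hmod]
    omega
  · have hr : uniformTTRanks d N j = N := if_neg hj
    have hmod (m : ℕ) : m % uniformTTRanks d N j = m % N := by rw [hr]
    rw [if_neg (by tauto), if_neg (by tauto), hmod, Nat.mod_mod, Nat.mod_eq_of_lt (by omega)]

lemma bondState_mk_mod (s t : Fin N) (γ : Fin (d + 2) → Fin N) (hs : γ 0 = s)
    (ht : γ (Fin.last (d + 1)) = t) (j : Fin (d + 2)) :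
    bondState s t j ⟨γ j % _, Nat.mod_lt _ (uniformTTRanks_pos s.pos j)⟩ = γ j := by
  unfold bondState
  split_ifs with h0 hl
  · rw [h0, hs]
  · rw [hl, ht]
  · have hr : uniformTTRanks (d + 1) N j = N := if_neg (by tauto)
    ext
    simp [hr, Nat.mod_eq_of_lt (γ j).isLt]

theorem isTTRep_of_eq_list_prod_apply {R : Type*} [CommRing R] {α : Fin (d + 1) → Type*}
    (f : (∀ i, α i) → R) (M : ∀ i, α i → Matrix (Fin N) (Fin N) R) (s t : Fin N)
    (hf : ∀ x, f x = (List.ofFn fun i => M i (x i)).prod s t) :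
    IsTTRep f (uniformTTRanks (d + 1) N) := by
  refine ⟨if_pos (Or.inl rfl), if_pos (Or.inr rfl),
    fun i a b c => M i a (bondState s t _ b) (bondState s t _ c), fun x => ?_⟩
  rw [hf, list_ofFn_prod_apply]
  symm
  -- `β ↦ bondState ∘ β` is a bijection onto the paths from `s` to `t`, inverse `γ ↦ γ % r`.
  apply Finset.sum_nbij' (fun β j => bondState s t j (β j))
    (fun γ j => ⟨γ j % _, Nat.mod_lt _ (uniformTTRanks_pos s.pos j)⟩)
  · intro β _
    simp [bondState, Fin.last_pos.ne']
  · simp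
  · intro β _
    funext j
    exact Fin.ext (val_bondState_mod s t j (β j))
  · intro γ hγ
    funext j
    simp only [Finset.mem_filter] at hγ
    exact bondState_mk_mod s t γ hγ.2.1 hγ.2.2 j
  · intro β _
    rfl

end UniformRanks

lemma Fin.prod_filter_val_succ {M : Type*} [CommMonoid M] {n : ℕ} (p : ℕ → Prop)
    [DecidablePred p] (f : Fin (n + 1) → M) :
    ∏ k ∈ univ.filter (fun k : Fin (n + 1) => p k), f k
      = (if p 0 then f 0 else 1) * ∏ k ∈ univ.filter (fun k : Fin n => p (k + 1)), f k.succ := by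
  rw [Finset.prod_filter, Finset.prod_filter, Fin.prod_univ_succ]
  by_cases h : p 0 <;> simp [h]

section XYChain

variable (n : ℕ) (P : Matrix (Fin 2) (Fin 2) ℂ)

lemma nnSum_succ (x : Fin (n + 3) → Fin 2 × Fin 2) :
    nnSum (n + 1) P x
      = P (x 0).1 (x 0).2 * P (x 1).1 (x 1).2
          * ∏ k : Fin (n + 1), (1 : Matrix (Fin 2) (Fin 2) ℂ) (x k.succ.succ).1 (x k.succ.succ).2
        + (1 : Matrix (Fin 2) (Fin 2) ℂ) (x 0).1 (x 0).2 * nnSum n P (fun i => x i.succ) := by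
  rw [nnSum, nnSum, Fin.sum_univ_succ, Finset.mul_sum]
  congr 1
  · simp [Finset.prod_filter, Fin.prod_univ_succ]
  · refine Finset.sum_congr rfl fun m _ => ?_
    rw [Fin.prod_filter_val_succ (· < (m.succ : ℕ)),
      Fin.prod_filter_val_succ ((m.succ : ℕ) + 1 < ·)]
    simp
    ring

lemma siteSum_succ (x : Fin (n + 3) → Fin 2 × Fin 2) :
    siteSum (n + 1) P x
      = P (x 0).1 (x 0).2
          * ∏ k : Fin (n + 2), (1 : Matrix (Fin 2) (Fin 2) ℂ) (x k.succ).1 (x k.succ).2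
        + (1 : Matrix (Fin 2) (Fin 2) ℂ) (x 0).1 (x 0).2 * siteSum n P (fun i => x i.succ) := by
  rw [siteSum, siteSum, Fin.sum_univ_succ, Finset.mul_sum]
  congr 1
  · simp [Finset.prod_filter, Fin.prod_univ_succ]
  · refine Finset.sum_congr rfl fun i _ => ?_
    rw [Fin.prod_filter_val_succ (· < (i.succ : ℕ)),
      Fin.prod_filter_val_succ ((i.succ : ℕ) < ·)]
    simp
    ring

end XYChain

section XYCore

variable (jP jQ lam : ℂ) (P Q S : Matrix (Fin 2) (Fin 2) ℂ)

def xyCore (x : Fin 2 × Fin 2) : Matrix (Fin 4) (Fin 4) ℂ :=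
  !![(1 : Matrix (Fin 2) (Fin 2) ℂ) x.1 x.2, P x.1 x.2, Q x.1 x.2, lam * S x.1 x.2;
     0, 0, 0, jP * P x.1 x.2;
     0, 0, 0, jQ * Q x.1 x.2;
     0, 0, 0, (1 : Matrix (Fin 2) (Fin 2) ℂ) x.1 x.2]

lemma list_prod_xyCore_apply_three :
    ∀ (n : ℕ) (x : Fin (n + 2) → Fin 2 × Fin 2),
      (fun a => (List.ofFn fun i => xyCore jP jQ lam P Q S (x i)).prod a 3)
        = ![jP * nnSum n P x + jQ * nnSum n Q x + lam * siteSum n S x,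
            jP * P (x 0).1 (x 0).2
              * ∏ k : Fin (n + 1), (1 : Matrix (Fin 2) (Fin 2) ℂ) (x k.succ).1 (x k.succ).2,
            jQ * Q (x 0).1 (x 0).2
              * ∏ k : Fin (n + 1), (1 : Matrix (Fin 2) (Fin 2) ℂ) (x k.succ).1 (x k.succ).2,
            ∏ k, (1 : Matrix (Fin 2) (Fin 2) ℂ) (x k).1 (x k).2]
  | 0, x => by
    funext a
    fin_cases a <;>
      simp [xyCore, nnSum, siteSum, List.ofFn_succ, Matrix.mul_apply, Fin.sum_univ_four,
        Finset.prod_filter, Matrix.one_apply]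
    split_ifs <;> ring
  | n + 1, x => by
    funext a
    have ih := congrFun (list_prod_xyCore_apply_three n (fun i => x i.succ))
    rw [nnSum_succ, nnSum_succ, siteSum_succ, List.ofFn_succ, List.prod_cons, mul_apply,
      Fin.sum_univ_four, ih 0, ih 1, ih 2, ih 3]
    fin_cases a <;> simp [xyCore, Fin.prod_univ_succ]
    ring

end XYCore

/-- The number of spins is `d = n + 2`. -/
theorem heisenberg_XY_tt_rank_le_six (n : ℕ) (jx jy lam : ℂ) :
    ∃ r : Fin (n + 3) → ℕ, (∀ j, r j ≤ 6) ∧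
      IsTTRep (fun x : Fin (n + 2) → Fin 2 × Fin 2 =>
        jx * nnSum n pauliX x + jy * nnSum n pauliY x
          + lam * siteSum n pauliX x) r := by
  refine ⟨uniformTTRanks (n + 2) 4, fun j => ?_, isTTRep_of_eq_list_prod_apply _
    (fun _ => xyCore jx jy lam pauliX pauliY pauliX) 0 3 fun x => ?_⟩
  · unfold uniformTTRanks
    split_ifs <;> norm_num
  · exact (congrFun (list_prod_xyCore_apply_three jx jy lam pauliX pauliY pauliX n x) 0).symm
end

section
/- Let K be a field, d ≥ 2, and N_1,…,N_d ∈ ℕ positive. For each m = 1,…,M let z^m ∈ ℤ^d be a stoichiometric vector and let w^m : Fin N_1 × ⋯ × Fin N_d → K be a propensity function admitting a TT representation with ranks (1, ρ^m_1, …, ρ^m_{d-1}, 1). Define the truncated CME operator A as the function on grouped indices, A((x_1,x'_1),…,(x_d,x'_d)) = Σ_{m=1}^M ( ∏_{i=1}^d [ (x'_i : ℤ) = (x_i : ℤ) + z^m_i ] − ∏_{i=1}^d [ x_i = x'_i ] ) · w^m(x'_1,…,x'_d), where [P] denotes 1 if P holds and 0 otherwise. Then A admits a TT representation (on the index types α_i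 = Fin N_i × Fin N_i) whose i-th rank is at most Σ_{m=1}^M 2 ρ^m_i for each i = 1,…,d−1. -/
/-!
Each entry of the CME operator is a sum over `m` of a shift term and a diagonal term, and
each of these `2M` terms is a product `∏ i, c i (x i, x' i)` of single-site factors times
`w^m (x')`. Multiplying the cores of `w^m` entrywise by these factors gives a TT
representation of the term with the ranks `ρ^m`. A sum of TT representations is represented
by block-diagonal cores whose bond space at `j` is the disjoint union of the summands' bond
spaces; this has the right size `∑ m, 2 ρ^m_j` in the interior, and the two boundary bond
spaces are brought back to a point by summing their index out inside the first and the
last core.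
-/

open scoped BigOperators

open Finset

namespace TensorTrain

variable {R : Type*} [CommRing R] {d : ℕ} {α : Fin d → Type*}

def contract {β : Fin (d + 1) → Type*} [∀ j, Fintype (β j)]
    (G : ∀ i : Fin d, α i → β i.castSucc → β i.succ → R) (x : ∀ i, α i) : R :=
  ∑ b : ∀ j, β j, ∏ i, G i (x i) (b i.castSucc) (b i.succ)

theorem isTTRep_of_eq_contract {β : Fin (d + 1) → Type*} [∀ j, Fintype (β j)]
    {f : (∀ i, α i) → R} {G : ∀ i : Fin d, α i → β i.castSucc → β i.succ → R}
    (hf : ∀ x, f x = contract G x) (h0 : Fintype.card (β 0) = 1)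
    (hlast : Fintype.card (β (Fin.last d)) = 1) :
    IsTTRep f fun j => Fintype.card (β j) := by
  refine ⟨h0, hlast, fun i y a b =>
    G i y ((Fintype.equivFin _).symm a) ((Fintype.equivFin _).symm b), fun x => ?_⟩
  rw [hf]
  exact Fintype.sum_equiv (Equiv.piCongrRight fun j => Fintype.equivFin (β j)) _ _
    fun b => prod_congr rfl fun i _ => by simp

theorem _root_.IsTTRep.exists_contract {f : (∀ i, α i) → R} {r : Fin (d + 1) → ℕ}
    (hf : IsTTRep f r) :
    ∃ G : ∀ i : Fin d, α i → Fin (r i.castSucc) → Fin (r i.succ) → R,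
      ∀ x, f x = contract (β := fun j => Fin (r j)) G x :=
  hf.2.2

theorem prod_mul_contract {α' : Fin d → Type*} {β : Fin (d + 1) → Type*}
    [∀ j, Fintype (β j)] (c : ∀ i, α' i → R) (π : ∀ i, α' i → α i)
    (G : ∀ i : Fin d, α i → β i.castSucc → β i.succ → R) (x : ∀ i, α' i) :
    (∏ i, c i (x i)) * contract G (fun i => π i (x i)) =
      contract (fun i y a b => c i y * G i (π i y) a b) x := by
  simp only [contract, mul_sum, prod_mul_distrib]

section BlockDiagonal

variable {ι : Type*} [Fintype ι] [DecidableEq ι] {β : ι → Fin (d + 1) → Type*}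
  [∀ m j, Fintype (β m j)]

abbrev BlockBond (β : ι → Fin (d + 1) → Type*) (j : Fin (d + 1)) : Type _ := Σ m, β m j

def blockDiag (G : ∀ m (i : Fin d), α i → β m i.castSucc → β m i.succ → R) (i : Fin d)
    (y : α i) (a : BlockBond β i.castSucc) (b : BlockBond β i.succ) : R :=
  if h : a.1 = b.1 then G b.1 i y (h ▸ a.2) b.2 else 0

theorem sum_contract_eq_contract_blockDiag
    (G : ∀ m (i : Fin d), α i → β m i.castSucc → β m i.succ → R) (x : ∀ i, α i) :
    ∑ m, contract (G m) x = contract (blockDiag G) x := by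
  let F : (Fin (d + 1) → ι) → R := fun P => ∑ c : ∀ j, β (P j) j,
    ∏ i, blockDiag G i (x i) ⟨_, c i.castSucc⟩ ⟨_, c i.succ⟩
  -- a path through the bond spaces that ever changes block contributes nothing
  have hF : ∀ P, P ∉ Set.range (fun m (_ : Fin (d + 1)) => m) → F P = 0 := by
    intro P hP
    obtain ⟨i, hi⟩ : ∃ i : Fin d, P i.castSucc ≠ P i.succ := by
      by_contra! h
      exact hP ⟨P 0, funext fun j => Fin.induction rfl (fun i hi => hi.trans (h i)) j⟩
    exact sum_eq_zero fun c _ => prod_eq_zero (mem_univ i) (dif_neg hi)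
  calc ∑ m, contract (G m) x = ∑ m, F fun _ => m := by
        simp only [contract, F, blockDiag, dite_true]
    _ = ∑ P, F P := Fintype.sum_of_injective _ (fun m m' h => congrFun h 0) _ _ hF fun _ => rfl
    _ = ∑ s : Σ P : Fin (d + 1) → ι, ∀ j, β (P j) j,
          ∏ i, blockDiag G i (x i) ⟨_, s.2 i.castSucc⟩ ⟨_, s.2 i.succ⟩ := by
        rw [Fintype.sum_sigma]
    _ = contract (blockDiag G) x :=
        Fintype.sum_equiv
          ⟨fun s j => ⟨s.1 j, s.2 j⟩, fun b => ⟨fun j => (b j).1, fun j => (b j).2⟩,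
          fun _ => rfl, fun _ => rfl⟩ _ _ fun _ => rfl

end BlockDiagonal

section Collapse

variable {β : Fin (d + 1) → Type*}

/-- The bond spaces with the two boundary ones (`j = 0` and `j = d`) replaced by a point:
an element is `none` at the boundary and `some b` inside. In `collapseCores` a boundary
index is summed out inside the adjacent core. -/
abbrev Collapsed (β : Fin (d + 1) → Type*) (j : Fin (d + 1)) : Type _ :=
  {u : Option (β j) // u.isSome ↔ 0 < (j : ℕ) ∧ (j : ℕ) < d}

theorem card_collapsed_of_not_interior [∀ j, Fintype (β j)] {j : Fin (d + 1)}
    (hj : ¬(0 < (j : ℕ) ∧ (j : ℕ) < d)) : Fintype.card (Collapsed β j) = 1 :=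
  Fintype.card_eq_one_iff.mpr ⟨⟨none, by simpa using hj⟩,
    fun u => Subtype.ext (Option.not_isSome_iff_eq_none.mp (mt u.2.mp hj))⟩

def Collapsed.get {j : Fin (d + 1)} (u : Collapsed β j) (hj : 0 < (j : ℕ) ∧ (j : ℕ) < d) :
    β j :=
  u.1.get (u.2.mpr hj)

theorem Collapsed.val_eq_some {j : Fin (d + 1)} (u : Collapsed β j)
    (hj : 0 < (j : ℕ) ∧ (j : ℕ) < d) : u.1 = some (u.get hj) :=
  (Option.some_get _).symm

theorem card_collapsed_of_interior [∀ j, Fintype (β j)] {j : Fin (d + 1)}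
    (hj : 0 < (j : ℕ) ∧ (j : ℕ) < d) : Fintype.card (Collapsed β j) = Fintype.card (β j) :=
  Fintype.card_congr
    { toFun := fun u => u.get hj
      invFun := fun b => ⟨some b, by simpa using hj⟩
      left_inv := fun u => Subtype.ext (u.val_eq_some hj).symm
      right_inv := fun _ => rfl }

def collapse (b : ∀ j, β j) (j : Fin (d + 1)) : Collapsed β j :=
  ⟨if 0 < (j : ℕ) ∧ (j : ℕ) < d then some (b j) else none, by
    split_ifs with h
    exacts [iff_of_true rfl h, iff_of_false Bool.false_ne_true h]⟩

theorem interior_of_ne {j : Fin (d + 1)} (h0 : j ≠ 0) (hl : j ≠ Fin.last d) :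
    0 < (j : ℕ) ∧ (j : ℕ) < d := by
  have := j.isLt
  have : (j : ℕ) ≠ 0 := fun h => h0 (Fin.ext h)
  have : (j : ℕ) ≠ d := fun h => hl (Fin.ext h)
  omega

def fill (u : ∀ j, Collapsed β j) (a : β 0) (c : β (Fin.last d)) (j : Fin (d + 1)) : β j :=
  if h0 : j = 0 then h0 ▸ a
  else if hl : j = Fin.last d then hl ▸ c
  else (u j).get (interior_of_ne h0 hl)

theorem fill_zero (u : ∀ j, Collapsed β j) (a : β 0) (c : β (Fin.last d)) :
    fill u a c 0 = a :=
  dif_pos rfl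

theorem fill_last [NeZero d] (u : ∀ j, Collapsed β j) (a : β 0) (c : β (Fin.last d)) :
    fill u a c (Fin.last d) = c := by
  rw [fill, dif_neg (Fin.last_pos'.ne' : Fin.last d ≠ 0), dif_pos rfl]

theorem fill_of_interior (u : ∀ j, Collapsed β j) (a : β 0) (c : β (Fin.last d))
    {j : Fin (d + 1)} (hj : 0 < (j : ℕ) ∧ (j : ℕ) < d) : fill u a c j = (u j).get hj := by
  have h0 : j ≠ 0 := fun h => by simp [h] at hj
  have hl : j ≠ Fin.last d := fun h => by simp [h] at hj
  rw [fill, dif_neg h0, dif_neg hl]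

theorem get_collapse (b : ∀ j, β j) {j : Fin (d + 1)} (hj : 0 < (j : ℕ) ∧ (j : ℕ) < d) :
    (collapse b j).get hj = b j :=
  Option.some_injective _ (((collapse b j).val_eq_some hj).symm.trans (if_pos hj))

def collapseEquiv [NeZero d] :
    (∀ j, β j) ≃ (∀ j, Collapsed β j) × β 0 × β (Fin.last d) where
  toFun b := (collapse b, b 0, b (Fin.last d))
  invFun t := fill t.1 t.2.1 t.2.2
  left_inv b := by
    funext j
    dsimp only
    by_cases h0 : j = 0
    · subst h0
      exact fill_zero ..
    by_cases hl : j = Fin.last d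
    · subst hl
      exact fill_last ..
    rw [fill_of_interior _ _ _ (interior_of_ne h0 hl), get_collapse]
  right_inv := fun ⟨u, a, c⟩ => by
    refine Prod.ext (funext fun j => Subtype.ext ?_) (Prod.ext (fill_zero u a c) (fill_last u a c))
    dsimp only [collapse]
    by_cases hj : 0 < (j : ℕ) ∧ (j : ℕ) < d
    · rw [if_pos hj, fill_of_interior _ _ _ hj, ← (u j).val_eq_some hj]
    · rw [if_neg hj, eq_comm, ← Option.not_isSome_iff_eq_none]
      exact mt (u j).2.mp hj

theorem sum_eq_sum_fill [NeZero d] [∀ j, Fintype (β j)] (F : (∀ j, β j) → R) :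
    ∑ b, F b = ∑ u : ∀ j, Collapsed β j, ∑ a, ∑ c, F (fill u a c) := by
  rw [← collapseEquiv.symm.sum_comp, Fintype.sum_prod_type]
  simp only [Fintype.sum_prod_type]
  rfl

def sumOrEval {γ : Type*} [Fintype γ] (u : Option γ) (g : γ → R) : R :=
  u.elim (∑ a, g a) g

variable [∀ j, Fintype (β j)]

theorem sumOrEval_collapsed_of_interior {j : Fin (d + 1)} (u : Collapsed β j)
    (hj : 0 < (j : ℕ) ∧ (j : ℕ) < d) (g : β j → R) : sumOrEval u.1 g = g (u.get hj) := by
  rw [sumOrEval, u.val_eq_some hj, Option.elim_some]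

theorem sumOrEval_collapsed_of_not_interior {j : Fin (d + 1)} (u : Collapsed β j)
    (hj : ¬(0 < (j : ℕ) ∧ (j : ℕ) < d)) (g : β j → R) : sumOrEval u.1 g = ∑ a, g a := by
  rw [sumOrEval, Option.not_isSome_iff_eq_none.mp (mt u.2.mp hj), Option.elim_none]

def collapseCores {α : Fin d → Type*}
    (G : ∀ i : Fin d, α i → β i.castSucc → β i.succ → R)
    (i : Fin d) (y : α i) (u : Collapsed β i.castSucc) (v : Collapsed β i.succ) : R :=
  sumOrEval u.1 fun a => sumOrEval v.1 fun c => G i y a c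

end Collapse

theorem sum_sum_prod_fill {n : ℕ} {α : Fin (n + 2) → Type*} {β : Fin (n + 3) → Type*}
    [∀ j, Fintype (β j)] (G : ∀ i : Fin (n + 2), α i → β i.castSucc → β i.succ → R)
    (x : ∀ i, α i) (u : ∀ j, Collapsed β j) :
    ∑ a, ∑ c, ∏ i, G i (x i) (fill u a c i.castSucc) (fill u a c i.succ) =
      ∏ i, collapseCores G i (x i) (u i.castSucc) (u i.succ) := by
  have hsplit : ∀ g : Fin (n + 2) → R,
      ∏ i, g i = g 0 * ((∏ k : Fin n, g k.castSucc.succ) * g (Fin.last (n + 1))) := by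
    intro g
    rw [Fin.prod_univ_succ, Fin.prod_univ_castSucc]
    rfl
  have h0 : ∀ a c, fill u a c (Fin.castSucc 0) = a := fill_zero u
  have hl : ∀ a c, fill u a c (Fin.last (n + 1)).succ = c := fill_last u
  simp (disch := simp only [Fin.val_succ, Fin.val_castSucc, Fin.val_zero, Fin.val_last]; omega)
    only [hsplit, collapseCores, h0, hl, fill_of_interior, sumOrEval_collapsed_of_interior,
      sumOrEval_collapsed_of_not_interior]
  simp only [Finset.sum_mul, Finset.mul_sum]
  exact Finset.sum_comm

theorem contract_collapseCores {n : ℕ} {α : Fin (n + 2) → Type*} {β : Fin (n + 3) → Type*}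
    [∀ j, Fintype (β j)] (G : ∀ i : Fin (n + 2), α i → β i.castSucc → β i.succ → R)
    (x : ∀ i, α i) : contract G x = contract (β := Collapsed β) (collapseCores G) x := by
  rw [contract, contract, sum_eq_sum_fill]
  exact Fintype.sum_congr _ _ fun u => sum_sum_prod_fill G x u

end TensorTrain

section CME

variable {R : Type*} [CommRing R] {d : ℕ} [NeZero d] {N : Fin d → ℕ}

/-- The factors of the shift term (`true`) and of the diagonal term (`false`) of the CME
operator; the minus sign of the diagonal term is carried by the first factor. -/
def cmeFactor (z : Fin d → ℤ) : Bool → ∀ i, Fin (N i) × Fin (N i) → R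
  | true, i, y => if ((y.2 : ℕ) : ℤ) = ((y.1 : ℕ) : ℤ) + z i then 1 else 0
  | false, i, y => (if i = 0 then -1 else 1) * if y.1 = y.2 then 1 else 0

theorem sum_prod_cmeFactor (z : Fin d → ℤ) (x : ∀ i, Fin (N i) × Fin (N i)) :
    ∑ s : Bool, ∏ i, cmeFactor z s i (x i) =
      (∏ i, if (((x i).2 : ℕ) : ℤ) = (((x i).1 : ℕ) : ℤ) + z i then (1 : R) else 0) -
        ∏ i, if (x i).1 = (x i).2 then (1 : R) else 0 := by
  have hsign : ∏ i : Fin d, (if i = 0 then -1 else 1 : R) = -1 := by simp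
  rw [Fintype.sum_bool, sub_eq_add_neg]
  simp only [cmeFactor, prod_mul_distrib, hsign, neg_one_mul]

end CME

open TensorTrain in
theorem cme_operator_tt_rank_bound_general {K : Type*} [Field K]
    (d : ℕ) (hd : 2 ≤ d) (M : ℕ)
    (N : Fin d → ℕ)
    (z : Fin M → Fin d → ℤ)
    (w : Fin M → ((∀ i, Fin (N i)) → K))
    (ρ : Fin M → Fin (d + 1) → ℕ)
    (hw : ∀ m, IsTTRep (w m) (ρ m))
    (A : (∀ i : Fin d, Fin (N i) × Fin (N i)) → K)
    (hA : ∀ x : ∀ i : Fin d, Fin (N i) × Fin (N i),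
      A x = ∑ m : Fin M,
        ((∏ i : Fin d, if (((x i).2 : ℕ) : ℤ) = (((x i).1 : ℕ) : ℤ) + z m i
            then (1 : K) else 0)
          - ∏ i : Fin d, if (x i).1 = (x i).2 then (1 : K) else 0)
        * w m (fun i => (x i).2)) :
    ∃ r : Fin (d + 1) → ℕ,
      IsTTRep A r ∧
      ∀ i : Fin (d + 1), 0 < (i : ℕ) → (i : ℕ) < d →
        r i ≤ ∑ m : Fin M, 2 * ρ m i := by
  obtain ⟨n, rfl⟩ : ∃ n, d = n + 2 := ⟨d - 2, by omega⟩
  choose W hW using fun m => (hw m).exists_contract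
  let β (p : Fin M × Bool) (j : Fin (n + 3)) : Type := Fin (ρ p.1 j)
  let core (p : Fin M × Bool) (i : Fin (n + 2)) (y : Fin (N i) × Fin (N i))
      (a : β p i.castSucc) (b : β p i.succ) : K :=
    cmeFactor (z p.1) p.2 i y * W p.1 i y.2 a b
  have hA' : ∀ x, A x = contract (collapseCores (blockDiag core)) x := by
    intro x
    rw [← contract_collapseCores, ← sum_contract_eq_contract_blockDiag, hA,
      Fintype.sum_prod_type]
    refine sum_congr rfl fun m _ => ?_
    rw [← sum_prod_cmeFactor, sum_mul]
    exact sum_congr rfl fun s _ => by rw [hW m, prod_mul_contract]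
  refine ⟨_, isTTRep_of_eq_contract hA' (card_collapsed_of_not_interior (by simp))
    (card_collapsed_of_not_interior (by simp)), fun i hi hid => ?_⟩
  rw [card_collapsed_of_interior ⟨hi, hid⟩]
  simp [β, Fintype.sum_prod_type, two_mul]

/-- **TT-rank bound for the truncated CME operator** (Lemma 4.1 of the paper):
if each propensity `w m` has a TT representation with ranks `ρ m`, then the CME
operator `A = Σ_m (J^{z^m} - J^0) diag(w^m)`, written entrywise on the grouped
indices `(x i, x' i) : Fin (N i) × Fin (N i)`, admits a TT representation whose
`i`-th rank is at most `Σ_m 2 * ρ m i` for every interior `i = 1, …, d-1`. -/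
theorem cme_operator_tt_rank_bound {K : Type*} [Field K]
    (d : ℕ) (hd : 2 ≤ d) (M : ℕ)
    (N : Fin d → ℕ) (hN : ∀ i, 0 < N i)
    (z : Fin M → Fin d → ℤ)
    (w : Fin M → ((∀ i, Fin (N i)) → K))
    (ρ : Fin M → Fin (d + 1) → ℕ)
    (hw : ∀ m, IsTTRep (w m) (ρ m))
    (A : (∀ i : Fin d, Fin (N i) × Fin (N i)) → K)
    (hA : ∀ x : ∀ i : Fin d, Fin (N i) × Fin (N i),
      A x = ∑ m : Fin M,
        ((∏ i : Fin d, if (((x i).2 : ℕ) : ℤ) = (((x i).1 : ℕ) : ℤ) + z m i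
            then (1 : K) else 0)
          - ∏ i : Fin d, if (x i).1 = (x i).2 then (1 : K) else 0)
        * w m (fun i => (x i).2)) :
    ∃ r : Fin (d + 1) → ℕ,
      IsTTRep A r ∧
      ∀ i : Fin (d + 1), 0 < (i : ℕ) → (i : ℕ) < d →
        r i ≤ ∑ m : Fin M, 2 * ρ m i :=
  cme_operator_tt_rank_bound_general d hd M N z w ρ hw A hA
end

section
/- Let R be a commutative ring, d ≥ 1, and let β_1,…,β_d be types with decidable equality. If w : β_1 × ⋯ × β_d → R admits a TT representation with ranks (1, r_1, …, r_{d-1}, 1), then the diagonal matrix function D((x_1,x'_1),…,(x_d,x'_d)) = (∏_{i=1}^d [x_i = x'_i]) · w(x_1,…,x_d), where [P] is 1 if P holds and 0 otherwise, admits a TT representation on the grouped index types α_i = β_i × β_i with the same ranks (1, r_1, …, r_{d-1}, 1). -/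
open scoped BigOperators

theorem IsTTRep.prod_mul_comp {R : Type*} [CommRing R] {d : ℕ} {α γ : Fin d → Type*}
    {f : (∀ i, α i) → R} {r : Fin (d + 1) → ℕ} (hf : IsTTRep f r)
    (φ : ∀ i, γ i → α i) (c : ∀ i, γ i → R) :
    IsTTRep (fun y => (∏ i, c i (y i)) * f (fun i => φ i (y i))) r := by
  obtain ⟨h0, hlast, G, hG⟩ := hf
  refine ⟨h0, hlast, fun i y => c i y • G i (φ i y), fun y => ?_⟩
  simp only [hG, Finset.mul_sum, Matrix.smul_apply, smul_eq_mul, Finset.prod_mul_distrib]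

theorem tt_diag_rank_general {R : Type*} [CommRing R] (d : ℕ)
    (β : Fin d → Type*) [∀ i, DecidableEq (β i)]
    (w : (∀ i, β i) → R) (r : Fin (d + 1) → ℕ) (hw : IsTTRep w r)
    (D : (∀ i : Fin d, β i × β i) → R)
    (hD : ∀ x : ∀ i : Fin d, β i × β i,
      D x = (∏ i : Fin d, if (x i).1 = (x i).2 then (1 : R) else 0)
              * w (fun i => (x i).1)) :
    IsTTRep D r := by
  rw [funext hD]
  exact hw.prod_mul_comp (fun i (p : β i × β i) => p.1)
    (fun i (p : β i × β i) => if p.1 = p.2 then 1 else 0)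

/-- **TT representation of a diagonal matrix**: if `w` has a TT representation
with ranks `(1, r 1, …, r (d-1), 1)`, then the diagonal matrix `diag(w)`,
written entrywise on the grouped index types `β i × β i`, admits a TT
representation with the same ranks. -/
theorem tt_diag_rank {R : Type*} [CommRing R] (d : ℕ) (hd : 1 ≤ d)
    (β : Fin d → Type*) [∀ i, DecidableEq (β i)]
    (w : (∀ i, β i) → R) (r : Fin (d + 1) → ℕ) (hw : IsTTRep w r)
    (D : (∀ i : Fin d, β i × β i) → R)
    (hD : ∀ x : ∀ i : Fin d, β i × β i,
      D x = (∏ i : Fin d, if (x i).1 = (x i).2 then (1 : R) else 0)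
              * w (fun i => (x i).1)) :
    IsTTRep D r :=
  tt_diag_rank_general d β w r hw D hD
end

section
/- Let R be a commutative ring, d ≥ 1, and let β_1,…,β_d be finite types. Suppose the matrix function a on grouped indices admits a TT representation with cores A_i : β_i × β_i → Matrix (Fin R_{i-1}) (Fin R_i) R (R_0 = R_d = 1), and the vector function f : β_1 × ⋯ × β_d → R admits a TT representation with cores F_i : β_i → Matrix (Fin r_{i-1}) (Fin r_i) R (r_0 = r_d = 1). Then the matrix-by-vector product g(x_1,…,x_d) = Σ_{(x'_1,…,x'_d)} a((x_1,x'_1),…,(x_d,x'_d)) · f(x'_1,…,x'_d) admits the TT representation with cores G_i(x_i) = Σ_{x'_i ∈ β_i} A_i(x_i,x'_i) ⊗ F_i(x'_i), where ⊗ is the Kronecker product of matrices; in particular g has a TT representation with ranks (1, R_1·r_1, …, R_{d-1}·r_{d-1}, 1). -/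
open scoped BigOperators

open Kronecker

section TTPathSum

variable {R : Type*} [CommRing R] {d : ℕ}

def ttPathSum {ι : Fin (d + 1) → Type*} [∀ j, Fintype (ι j)]
    (G : ∀ i : Fin d, Matrix (ι i.castSucc) (ι i.succ) R) : R :=
  ∑ γ : ∀ j, ι j, ∏ i, G i (γ i.castSucc) (γ i.succ)

theorem ttPathSum_sum {ι : Fin (d + 1) → Type*} [∀ j, Fintype (ι j)]
    {β : Fin d → Type*} [∀ i, Fintype (β i)]
    (G : ∀ i : Fin d, β i → Matrix (ι i.castSucc) (ι i.succ) R) :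
    ttPathSum (fun i => ∑ y : β i, G i y) = ∑ y : ∀ i, β i, ttPathSum (fun i => G i (y i)) := by
  simp only [ttPathSum, Matrix.sum_apply, Finset.prod_univ_sum, Fintype.piFinset_univ]
  exact Finset.sum_comm

theorem ttPathSum_kronecker {m n : Fin (d + 1) → Type*} [∀ j, Fintype (m j)]
    [∀ j, Fintype (n j)] (P : ∀ i : Fin d, Matrix (m i.castSucc) (m i.succ) R)
    (Q : ∀ i : Fin d, Matrix (n i.castSucc) (n i.succ) R) :
    ttPathSum (ι := fun j => m j × n j) (fun i => P i ⊗ₖ Q i) = ttPathSum P * ttPathSum Q := by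
  rw [ttPathSum, ttPathSum, ttPathSum, Finset.sum_mul_sum, ← Fintype.sum_prod_type',
    ← (Equiv.arrowProdEquivProdArrow _ m n).sum_comp]
  simp [Matrix.kroneckerMap_apply, Finset.prod_mul_distrib]

theorem ttPathSum_reindex {ι κ : Fin (d + 1) → Type*} [∀ j, Fintype (ι j)] [∀ j, Fintype (κ j)]
    (e : ∀ j, ι j ≃ κ j) (G : ∀ i : Fin d, Matrix (ι i.castSucc) (ι i.succ) R) :
    ttPathSum (fun i => Matrix.reindex (e i.castSucc) (e i.succ) (G i)) = ttPathSum G := by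
  rw [ttPathSum, ttPathSum, ← (Equiv.piCongrRight e).sum_comp]
  simp [Equiv.piCongrRight]

theorem isTTRep_of_eq_ttPathSum {ι : Fin (d + 1) → Type*} [∀ j, Fintype (ι j)]
    {α : Fin d → Type*} {r : Fin (d + 1) → ℕ} (hr0 : r 0 = 1) (hrd : r (Fin.last d) = 1)
    (e : ∀ j, ι j ≃ Fin (r j)) (f : (∀ i, α i) → R)
    (G : ∀ i : Fin d, α i → Matrix (ι i.castSucc) (ι i.succ) R)
    (hf : ∀ x, f x = ttPathSum (fun i => G i (x i))) : IsTTRep f r :=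
  ⟨hr0, hrd, fun i y => Matrix.reindex (e i.castSucc) (e i.succ) (G i y),
    fun x => (hf x).trans (ttPathSum_reindex e _).symm⟩

end TTPathSum

theorem tt_matvec_kronecker_general {R : Type*} [CommRing R] (d : ℕ)
    (β : Fin d → Type*) [∀ i, Fintype (β i)]
    (Ra rf : Fin (d + 1) → ℕ)
    (hRa0 : Ra 0 = 1) (hRad : Ra (Fin.last d) = 1)
    (hrf0 : rf 0 = 1) (hrfd : rf (Fin.last d) = 1)
    (A : ∀ i : Fin d, β i × β i → Matrix (Fin (Ra i.castSucc)) (Fin (Ra i.succ)) R)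
    (F : ∀ i : Fin d, β i → Matrix (Fin (rf i.castSucc)) (Fin (rf i.succ)) R)
    (a : (∀ i : Fin d, β i × β i) → R) (f : (∀ i, β i) → R)
    (ha : ∀ x : ∀ i : Fin d, β i × β i,
      a x = ∑ γ : ∀ j : Fin (d + 1), Fin (Ra j),
              ∏ i : Fin d, A i (x i) (γ i.castSucc) (γ i.succ))
    (hf : ∀ y : ∀ i, β i,
      f y = ∑ γ : ∀ j : Fin (d + 1), Fin (rf j),
              ∏ i : Fin d, F i (y i) (γ i.castSucc) (γ i.succ))
    (g : (∀ i, β i) → R)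
    (hg : ∀ x : ∀ i, β i,
      g x = ∑ y : ∀ i, β i, a (fun i => (x i, y i)) * f y) :
    (∀ x : ∀ i, β i,
      g x = ∑ γ : ∀ j : Fin (d + 1), Fin (Ra j) × Fin (rf j),
              ∏ i : Fin d,
                (∑ x' : β i, A i (x i, x') ⊗ₖ F i x') (γ i.castSucc) (γ i.succ))
    ∧ ∃ t : Fin (d + 1) → ℕ, (∀ j, t j = Ra j * rf j) ∧ IsTTRep g t := by
  have hcores : ∀ x, g x = ttPathSum (ι := fun j => Fin (Ra j) × Fin (rf j))
      (fun i => ∑ x' : β i, A i (x i, x') ⊗ₖ F i x') := by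
    intro x
    rw [hg, ttPathSum_sum]
    refine Fintype.sum_congr _ _ fun y => ?_
    rw [ha, hf]
    exact (ttPathSum_kronecker (m := fun j => Fin (Ra j)) (n := fun j => Fin (rf j)) _ _).symm
  refine ⟨hcores, fun j => Ra j * rf j, fun _ => rfl, ?_⟩
  refine isTTRep_of_eq_ttPathSum ?_ ?_ (fun _ => finProdFinEquiv) g
    (fun i xi => ∑ x' : β i, A i (xi, x') ⊗ₖ F i x') hcores
  · simp only [hRa0, hrf0, mul_one]
  · simp only [hRad, hrfd, mul_one]

/-- **TT representation of a matrix-by-vector product** (cf. Section 3.1 of the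
paper).  If the matrix `a` (on grouped indices `β i × β i`) is given by TT cores
`A i` with ranks `Ra`, and the vector `f` by TT cores `F i` with ranks `rf`,
then `g = a · f` is represented by the TT cores
`G i (x i) = Σ_{x'} A i (x i, x') ⊗ₖ F i x'` (Kronecker products), so that `g`
admits a TT representation with ranks `(1, Ra 1 * rf 1, …, Ra (d-1) * rf (d-1), 1)`. -/
theorem tt_matvec_kronecker {R : Type*} [CommRing R] (d : ℕ) (hd : 1 ≤ d)
    (β : Fin d → Type*) [∀ i, Fintype (β i)]
    (Ra rf : Fin (d + 1) → ℕ)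
    (hRa0 : Ra 0 = 1) (hRad : Ra (Fin.last d) = 1)
    (hrf0 : rf 0 = 1) (hrfd : rf (Fin.last d) = 1)
    (A : ∀ i : Fin d, β i × β i → Matrix (Fin (Ra i.castSucc)) (Fin (Ra i.succ)) R)
    (F : ∀ i : Fin d, β i → Matrix (Fin (rf i.castSucc)) (Fin (rf i.succ)) R)
    (a : (∀ i : Fin d, β i × β i) → R) (f : (∀ i, β i) → R)
    (ha : ∀ x : ∀ i : Fin d, β i × β i,
      a x = ∑ γ : ∀ j : Fin (d + 1), Fin (Ra j),
              ∏ i : Fin d, A i (x i) (γ i.castSucc) (γ i.succ))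
    (hf : ∀ y : ∀ i, β i,
      f y = ∑ γ : ∀ j : Fin (d + 1), Fin (rf j),
              ∏ i : Fin d, F i (y i) (γ i.castSucc) (γ i.succ))
    (g : (∀ i, β i) → R)
    (hg : ∀ x : ∀ i, β i,
      g x = ∑ y : ∀ i, β i, a (fun i => (x i, y i)) * f y) :
    (∀ x : ∀ i, β i,
      g x = ∑ γ : ∀ j : Fin (d + 1), Fin (Ra j) × Fin (rf j),
              ∏ i : Fin d,
                (∑ x' : β i, A i (x i, x') ⊗ₖ F i x') (γ i.castSucc) (γ i.succ))
    ∧ ∃ t : Fin (d + 1) → ℕ, (∀ j, t j = Ra j * rf j) ∧ IsTTRep g t :=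
  tt_matvec_kronecker_general d β Ra rf hRa0 hRad hrf0 hrfd A F a f ha hf g hg
end

section
/- Let K be a field, d ≥ 2, and let α_1,…,α_d be finite nonempty types. Every function f : α_1 × ⋯ × α_d → K admits a TT representation with ranks (1, r_1, …, r_{d-1}, 1) where r_i equals the rank of the i-th unfolding matrix of f, for each i = 1,…,d−1. -/
open scoped BigOperators

/-- The `i`-th unfolding matrix of `f`: rows are indexed by the tuples over the
first `i` variables (`k` with `(k : ℕ) < i`), columns by the tuples over the
remaining variables, and the entry is the value of `f` at the assembled point. -/
def unfoldingMatrix {K : Type*} [Field K] {d : ℕ} {α : Fin d → Type*}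
    (f : (∀ i, α i) → K) (i : ℕ) :
    Matrix (∀ k : {k : Fin d // (k : ℕ) < i}, α k.val)
           (∀ k : {k : Fin d // ¬ (k : ℕ) < i}, α k.val) K :=
  fun u v => f (fun k => if h : (k : ℕ) < i then u ⟨k, h⟩ else v ⟨k, h⟩)

/-!
Let `Sₙ` be the span of the rows of the `n`-th unfolding of `f`, each row read as a function of
`x_{n+1}, …, x_d`; its dimension is the rank of that unfolding. Fixing `x_{n+1} = a` in a row of
`Sₙ` gives a row of `Sₙ₊₁`, so fixing it in the vectors of a basis of `Sₙ` expands them in a basis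
of `Sₙ₊₁`, and the coefficients form the core `G_{n+1}(a)`. At the ends, `S₀` is replaced by the
line through `f` and `S_d` is the line of constants. Evaluating all these expansions at the same
point `x` and telescoping them from `f` down to the constant `1` writes `f x` as the matrix product
`G₁(x₁) ⋯ G_d(x_d)`.
-/

open Matrix

theorem sum_paths_mul_eq_dotProduct {R : Type*} [CommSemiring R] :
    ∀ {n : ℕ} {ρ : ℕ → ℕ} (M : ∀ i : Fin n, Matrix (Fin (ρ i)) (Fin (ρ (i + 1))) R)
      (F : ∀ j, Fin (ρ j) → R), (∀ i : Fin n, F i = M i *ᵥ F (i + 1)) →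
      ∀ u : Fin (ρ 0) → R,
      ∑ β : ∀ j : Fin (n + 1), Fin (ρ j),
        u (β 0) * (∏ i, M i (β i.castSucc) (β i.succ)) * F n (β (Fin.last n)) = u ⬝ᵥ F 0
  | 0, ρ, M, F, _, u => by
    rw [← (Equiv.piUnique fun j : Fin 1 => Fin (ρ j)).symm.sum_comp]
    simp only [Finset.univ_eq_empty, Finset.prod_empty, mul_one, dotProduct]
    rfl
  | n + 1, ρ, M, F, hF, u => by
    calc _ = ∑ β : ∀ j : Fin (n + 1), Fin (ρ (j + 1)), (u ᵥ* M 0) (β 0) *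
              (∏ i : Fin n, M i.succ (β i.castSucc) (β i.succ)) *
              F (n + 1) (β (Fin.last n)) := by
          rw [← (Fin.consEquiv fun j : Fin (n + 2) => Fin (ρ j)).sum_comp,
            Fintype.sum_prod_type, Finset.sum_comm]
          refine Finset.sum_congr rfl fun β _ => ?_
          simp only [vecMul, dotProduct, Finset.sum_mul, Fin.prod_univ_succ]
          refine Finset.sum_congr rfl fun b _ => ?_
          rw [← mul_assoc]; rfl
      _ = (u ᵥ* M 0) ⬝ᵥ F 1 :=
          sum_paths_mul_eq_dotProduct (fun i => M i.succ) (fun j => F (j + 1))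
            (fun i => by exact hF i.succ) _
      _ = u ⬝ᵥ (M 0 *ᵥ F 1) := (dotProduct_mulVec _ _ _).symm
      _ = u ⬝ᵥ F 0 := congrArg (u ⬝ᵥ ·) (hF 0).symm

theorem isTTRep_of_slice_mem_span {R : Type*} [CommRing R] {d : ℕ} {α : Fin d → Type*}
    (f : (∀ i, α i) → R) (ρ : ℕ → ℕ) (w : ∀ n, Fin (ρ n) → (∀ i, α i) → R)
    (hρ₀ : ρ 0 = 1) (hρd : ρ d = 1) (hw₀ : ∀ β, w 0 β = f) (hwd : ∀ β, w d β = 1)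
    (hslice : ∀ (i : Fin d) (a : α i) (β : Fin (ρ i)),
      (fun x => w i β (Function.update x i a)) ∈ Submodule.span R (Set.range (w (i + 1)))) :
    IsTTRep f fun j => ρ j := by
  choose G hG using fun i a β => (Submodule.mem_span_range_iff_exists_fun R).1 (hslice i a β)
  refine ⟨hρ₀, hρd, G, fun x => ?_⟩
  -- the slice relations, read at `x` itself, since `update x i (x i) = x`
  have hchain : ∀ i : Fin d, (fun β => w i β x) = G i (x i) *ᵥ fun γ => w (i + 1) γ x := by
    intro i
    funext β
    have hβ := congrFun (hG i (x i) β) x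
    rw [Function.update_eq_self] at hβ
    simp only [← hβ, Finset.sum_apply, Pi.smul_apply, smul_eq_mul, mulVec, dotProduct]
  have hpaths :=
    sum_paths_mul_eq_dotProduct (fun i => G i (x i)) (fun j β => w j β x) hchain fun _ => 1
  simp only [hw₀, hwd, Pi.one_apply, one_mul, mul_one, dotProduct] at hpaths
  rw [hpaths, Finset.sum_const, Finset.card_univ, Fintype.card_fin, hρ₀, one_smul]

section Unfolding

variable {K : Type*} [Field K] {d : ℕ} {α : Fin d → Type*}

/-- The rows of the `n`-th unfolding of `f`, each viewed as a function of a full point that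
ignores the coordinates before `n`. -/
def unfoldingRowSpace (f : (∀ i, α i) → K) (n : ℕ) : Submodule K ((∀ i, α i) → K) :=
  Submodule.span K
    (Set.range fun y x : (∀ i, α i) => f fun k => if (k : ℕ) < n then y k else x k)

theorem slice_mem_unfoldingRowSpace_succ (f : (∀ i, α i) → K) (i : Fin d) (a : α i)
    {g : (∀ i, α i) → K} (hg : g ∈ unfoldingRowSpace f i) :
    (fun x => g (Function.update x i a)) ∈ unfoldingRowSpace f (i + 1) := by
  suffices unfoldingRowSpace f i ≤
      (unfoldingRowSpace f (i + 1)).comap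
        (LinearMap.funLeft K K fun x => Function.update x i a) from this hg
  refine Submodule.span_le.2 ?_
  rintro _ ⟨y, rfl⟩
  refine Submodule.subset_span ⟨Function.update y i a, funext fun x => congrArg f ?_⟩
  funext k
  by_cases hki : k = i
  · subst hki
    simp
  · have hki_val : (k : ℕ) ≠ i := fun h => hki (Fin.ext h)
    simp only [Function.update_of_ne hki]
    split_ifs <;> first | rfl | omega

theorem mem_unfoldingRowSpace_zero [∀ i, Nonempty (α i)] (f : (∀ i, α i) → K) :
    f ∈ unfoldingRowSpace f 0 :=
  Submodule.subset_span ⟨Classical.arbitrary _, by simp⟩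

theorem unfoldingRowSpace_last_le_span_one (f : (∀ i, α i) → K) :
    unfoldingRowSpace f d ≤ K ∙ 1 := by
  refine Submodule.span_le.2 ?_
  rintro _ ⟨y, rfl⟩
  refine Submodule.mem_span_singleton.2 ⟨f y, funext fun x => ?_⟩
  simp

theorem finrank_unfoldingRowSpace [∀ i, Fintype (α i)] [∀ i, Nonempty (α i)]
    (f : (∀ i, α i) → K) (n : ℕ) :
    Module.finrank K (unfoldingRowSpace f n) = (unfoldingMatrix f n).rank := by
  let restrict : (∀ i, α i) → ∀ k : {k : Fin d // ¬ (k : ℕ) < n}, α k.val :=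
    fun x k => x k
  have hrestrict : Function.Surjective restrict := fun v =>
    ⟨fun k => if h : (k : ℕ) < n then Classical.arbitrary _ else v ⟨k, h⟩, by
      funext k; simp [restrict, k.2]⟩
  let Φ := LinearMap.funLeft K K restrict
  have hΦ : Function.Injective Φ := LinearMap.funLeft_injective_of_surjective _ _ _ hrestrict
  have hmap :
      unfoldingRowSpace f n = (Submodule.span K (Set.range (unfoldingMatrix f n).row)).map Φ := by
    rw [Submodule.map_span, ← Set.range_comp, unfoldingRowSpace]
    refine congrArg (Submodule.span K) (Set.ext fun g => ?_)
    constructor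
    · rintro ⟨y, rfl⟩
      exact ⟨fun k => y k, rfl⟩
    · rintro ⟨u, rfl⟩
      refine ⟨fun k => if h : (k : ℕ) < n then u ⟨k, h⟩ else Classical.arbitrary _, ?_⟩
      funext x
      exact congrArg f (funext fun k => by by_cases h : (k : ℕ) < n <;> simp [h, restrict])
  rw [Matrix.rank_eq_finrank_span_row, hmap,
    (Submodule.equivMapOfInjective Φ hΦ _).finrank_eq]

theorem isTTRep_finrank_unfoldingRowSpace (hd : d ≠ 0) [∀ i, Fintype (α i)]
    [∀ i, Nonempty (α i)] (f : (∀ i, α i) → K) :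
    IsTTRep f fun j : Fin (d + 1) =>
      if (j : ℕ) = 0 ∨ (j : ℕ) = d then 1 else Module.finrank K (unfoldingRowSpace f j) := by
  set ρ : ℕ → ℕ := fun n =>
    if n = 0 ∨ n = d then 1 else Module.finrank K (unfoldingRowSpace f n)
  have hfamily : ∀ n, ∃ w : Fin (ρ n) → (∀ i, α i) → K,
      (n = 0 → ∀ β, w β = f) ∧ (n = d → ∀ β, w β = 1) ∧
      (n < d → ∀ β, w β ∈ unfoldingRowSpace f n) ∧
      (0 < n → unfoldingRowSpace f n ≤ Submodule.span K (Set.range w)) := by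
    intro n
    by_cases hn₀ : n = 0
    · subst hn₀
      exact ⟨fun _ => f, fun _ _ => rfl, fun h => absurd h.symm hd,
        fun _ _ => mem_unfoldingRowSpace_zero f, fun h => absurd h (lt_irrefl 0)⟩
    by_cases hnd : n = d
    · subst hnd
      have : Nonempty (Fin (ρ n)) := ⟨⟨0, by simp [ρ]⟩⟩
      refine ⟨fun _ => 1, fun h => absurd h hn₀, fun _ _ => rfl,
        fun h => absurd h (lt_irrefl n), fun _ => ?_⟩
      rw [Set.range_const]
      exact unfoldingRowSpace_last_le_span_one f
    have hρn : Module.finrank K (unfoldingRowSpace f n) = ρ n := by simp [ρ, hn₀, hnd]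
    let b := Module.finBasisOfFinrankEq K (unfoldingRowSpace f n) hρn
    refine ⟨(unfoldingRowSpace f n).subtype ∘ b, fun h => absurd h hn₀,
      fun h => absurd h hnd, fun _ β => (b β).2, fun _ => ?_⟩
    rw [Set.range_comp, Submodule.span_image, b.span_eq, Submodule.map_subtype_top]
  choose w hw₀ hwd hw_mem hw_span using hfamily
  exact isTTRep_of_slice_mem_span f ρ w (by simp [ρ]) (by simp [ρ]) (hw₀ 0 rfl) (hwd d rfl)
    fun i a β =>
      hw_span _ (Nat.succ_pos i) (slice_mem_unfoldingRowSpace_succ f i a (hw_mem i i.2 β))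

end Unfolding

/-- **Exact TT representation with unfolding ranks (TT-SVD)**: every function
`f` on a product of finite nonempty types admits a TT representation whose
`i`-th rank equals the rank of the `i`-th unfolding matrix of `f` for every
interior `i = 1, …, d-1` (and equals 1 at the boundary). -/
theorem exists_tt_rep_with_unfolding_ranks {K : Type*} [Field K]
    (d : ℕ) (hd : 2 ≤ d)
    (α : Fin d → Type*) [∀ i, Fintype (α i)] [∀ i, Nonempty (α i)]
    (f : (∀ i, α i) → K) :
    IsTTRep f (fun i : Fin (d + 1) =>
      if (i : ℕ) = 0 ∨ (i : ℕ) = d then 1 else (unfoldingMatrix f (i : ℕ)).rank) := by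
  simpa only [finrank_unfoldingRowSpace] using
    isTTRep_finrank_unfoldingRowSpace (by omega : d ≠ 0) f
end

section
/- Let R be a commutative ring, d ≥ 2, and let α_1,…,α_d be types. Let E_k : α_k → R and D_k : α_k → R for k = 1,…,d. Define the Laplace-like sum H : α_1 × ⋯ × α_d → R by H(x_1,…,x_d) = Σ_{m=1}^d (∏_{k=1}^{m-1} E_k(x_k)) · D_m(x_m) · (∏_{k=m+1}^d E_k(x_k)). Define cores G_1(x_1) = [D_1(x_1), E_1(x_1)] (a 1×2 row matrix), G_i(x_i) = [[E_i(x_i), 0], [D_i(x_i), E_i(x_i)]] (a 2×2 matrix) for 2 ≤ i ≤ d−1, and G_d(x_d) = [E_d(x_d); D_d(x_d)] (a 2×1 column matrix). Then for all (x_1,…,x_d), H(x_1,…,x_d) equals the unique entry of the product G_1(x_1)·G_2(x_2)⋯G_d(x_d). In particular H admits a TT representation with all ranks equal to 2. -/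
open Finset Matrix

section

variable {R : Type*} [CommSemiring R]

def laplaceSum (e d : ℕ → R) (t : ℕ) : R :=
  ∑ m ∈ range t, (∏ k ∈ range m, e k) * d m * ∏ k ∈ Ico (m + 1) t, e k

theorem laplaceSum_succ (e d : ℕ → R) (t : ℕ) :
    laplaceSum e d (t + 1) = laplaceSum e d t * e t + (∏ k ∈ range t, e k) * d t := by
  rw [laplaceSum, sum_range_succ, Ico_self, prod_empty, mul_one, laplaceSum, sum_mul]
  congr 1
  refine sum_congr rfl fun m hm => ?_
  rw [prod_Ico_succ_top (by simpa using hm)]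
  ring

theorem row_mul_prod_eq_laplaceSum_row (e d : ℕ → R) (t : ℕ) :
    !![d 0, e 0] * (List.ofFn fun i : Fin t => !![e (i + 1), 0; d (i + 1), e (i + 1)]).prod
      = !![laplaceSum e d (t + 1), ∏ k ∈ range (t + 1), e k] := by
  induction t with
  | zero => simp [laplaceSum]
  | succ t ih =>
    rw [List.ofFn_succ', List.prod_concat, ← Matrix.mul_assoc]
    simp only [Fin.val_castSucc, ih, laplaceSum_succ _ _ (t + 1), prod_range_succ _ (t + 1),
      Fin.val_last]
    ext i j
    fin_cases i; fin_cases j <;> simp [Matrix.mul_apply]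

theorem laplaceSum_eq_row_mul_prod_mul_col (e d : ℕ → R) (t : ℕ) :
    laplaceSum e d (t + 2) = (!![d 0, e 0] *
      (List.ofFn fun i : Fin t => !![e (i + 1), 0; d (i + 1), e (i + 1)]).prod *
      !![e (t + 1); d (t + 1)]) 0 0 := by
  rw [row_mul_prod_eq_laplaceSum_row, laplaceSum_succ]
  simp [Matrix.mul_apply]

theorem prod_filter_val_eq_prod_extend {N : ℕ} (f : Fin N → R) (p : ℕ → Prop)
    [DecidablePred p] :
    ∏ k ∈ univ.filter (fun k : Fin N => p k), f k
      = ∏ k ∈ (range N).filter p, Function.extend Fin.val f 0 k := by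
  rw [prod_filter, prod_filter, ← Fin.prod_univ_eq_prod_range]
  simp [Fin.val_injective.extend_apply]

theorem sum_fin_eq_laplaceSum_extend {N : ℕ} (e d : Fin N → R) :
    ∑ m : Fin N, (∏ k ∈ univ.filter (fun k : Fin N => (k : ℕ) < m), e k) * d m
        * ∏ k ∈ univ.filter (fun k : Fin N => (m : ℕ) < k), e k
      = laplaceSum (Function.extend Fin.val e 0) (Function.extend Fin.val d 0) N := by
  rw [laplaceSum, ← Fin.sum_univ_eq_sum_range]
  refine sum_congr rfl fun m _ => ?_
  rw [prod_filter_val_eq_prod_extend e (· < m), prod_filter_val_eq_prod_extend e (m < ·),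
    Fin.val_injective.extend_apply]
  have hlt : (range N).filter (· < (m : ℕ)) = range m := by ext; simp; omega
  have hgt : (range N).filter ((m : ℕ) < ·) = Ico ((m : ℕ) + 1) N := by ext; simp; omega
  rw [hlt, hgt]

theorem sum_filter_prod_eq_row_mul_prod_mul_col (n : ℕ) (e d : Fin (n + 2) → R) :
    ∑ m : Fin (n + 2), (∏ k ∈ univ.filter (fun k : Fin (n + 2) => (k : ℕ) < m), e k) * d m
        * ∏ k ∈ univ.filter (fun k : Fin (n + 2) => (m : ℕ) < k), e k
      = (!![d 0, e 0] *
          (List.ofFn fun m : Fin n =>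
            !![e m.succ.castSucc, 0; d m.succ.castSucc, e m.succ.castSucc]).prod *
          !![e (Fin.last (n + 1)); d (Fin.last (n + 1))]) 0 0 := by
  have hext (f : Fin (n + 2) → R) (k : Fin (n + 2)) : Function.extend Fin.val f 0 k = f k :=
    Fin.val_injective.extend_apply f 0 k
  rw [sum_fin_eq_laplaceSum_extend, laplaceSum_eq_row_mul_prod_mul_col]
  simp only [← hext, Fin.val_zero, Fin.val_castSucc, Fin.val_succ, Fin.val_last]

theorem Matrix.sum_paths_eq_dotProduct_list_prod_mulVec {ι : Type*} [Fintype ι] [DecidableEq ι]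
    {k : ℕ} (M : Fin k → Matrix ι ι R) (u v : ι → R) :
    ∑ γ : Fin (k + 1) → ι,
        u (γ 0) * (∏ i, M i (γ i.castSucc) (γ i.succ)) * v (γ (Fin.last k))
      = u ⬝ᵥ ((List.ofFn M).prod *ᵥ v) := by
  induction k generalizing u with
  | zero =>
    rw [← (Equiv.funUnique (Fin 1) ι).symm.sum_comp]
    simp [dotProduct]
  | succ k ih =>
    rw [← (Fin.consEquiv fun _ => ι).sum_comp, Fintype.sum_prod_type, List.ofFn_succ,
      List.prod_cons, ← Matrix.mulVec_mulVec, Matrix.dotProduct_mulVec, ← ih]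
    simp only [Fin.consEquiv_apply, Fin.prod_univ_succ, Fin.cons_zero, Fin.castSucc_zero,
      Fin.cons_succ, ← Fin.succ_castSucc, ← Fin.succ_last, vecMul, dotProduct, sum_mul]
    rw [sum_comm]
    refine sum_congr rfl fun γ _ => sum_congr rfl fun a _ => ?_
    ring

theorem sum_pi_castLE_eq_sum {M : Type*} [AddCommMonoid M] {d k : ℕ} {r : Fin d → ℕ}
    (hr : ∀ j, r j ≤ k) (g : (Fin d → Fin k) → M)
    (hg : ∀ γ : Fin d → Fin k, (∃ j, r j ≤ γ j) → g γ = 0) :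
    ∑ β : ∀ j, Fin (r j), g (fun j => Fin.castLE (hr j) (β j)) = ∑ γ, g γ := by
  refine Fintype.sum_of_injective _ ?_ _ g (fun γ hγ => hg γ ?_) fun _ => rfl
  · intro β β' h
    funext j
    exact Fin.castLE_injective _ (congrFun h j)
  · by_contra! hlt
    exact hγ ⟨fun j => ⟨γ j, hlt j⟩, rfl⟩

def laplaceRank (n : ℕ) (j : Fin (n + 3)) : ℕ :=
  if (j : ℕ) = 0 ∨ (j : ℕ) = n + 2 then 1 else 2

theorem laplaceRank_le_two (n : ℕ) (j : Fin (n + 3)) : laplaceRank n j ≤ 2 := by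
  unfold laplaceRank; split_ifs <;> omega

/-- The boundary row `[d, e]` and column `[e; d]` are padded by zeros to `2 × 2`, so that
index paths through the padding contribute nothing. -/
def laplaceCore (n : ℕ) (i : Fin (n + 2)) (e d : R) : Matrix (Fin 2) (Fin 2) R :=
  if (i : ℕ) = 0 then !![d, e; 0, 0]
  else if (i : ℕ) = n + 1 then !![e, 0; d, 0]
  else !![e, 0; d, e]

theorem list_prod_laplaceCore_eq (n : ℕ) (e d : Fin (n + 2) → R) :
    (List.ofFn fun i => laplaceCore n i (e i) (d i)).prod
      = !![d 0, e 0; 0, 0]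
        * (List.ofFn fun m : Fin n =>
            !![e m.succ.castSucc, 0; d m.succ.castSucc, e m.succ.castSucc]).prod
        * !![e (Fin.last (n + 1)), 0; d (Fin.last (n + 1)), 0] := by
  have hmid (m : Fin n) : laplaceCore n m.succ.castSucc (e m.succ.castSucc) (d m.succ.castSucc)
      = !![e m.succ.castSucc, 0; d m.succ.castSucc, e m.succ.castSucc] := by
    have := m.2
    rw [laplaceCore, if_neg (by simp), if_neg (by simp; omega)]
  have hfirst : laplaceCore n 0 (e 0) (d 0) = !![d 0, e 0; 0, 0] := by simp [laplaceCore]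
  have hlast : laplaceCore n (Fin.last (n + 1)) (e (Fin.last (n + 1))) (d (Fin.last (n + 1)))
      = !![e (Fin.last (n + 1)), 0; d (Fin.last (n + 1)), 0] := by simp [laplaceCore]
  rw [List.ofFn_succ, List.ofFn_succ', List.prod_cons, List.prod_concat, ← Matrix.mul_assoc]
  simp only [Fin.succ_castSucc, hmid, Fin.succ_last, hfirst, hlast]

theorem laplaceCore_zero_apply_one (n : ℕ) (e d : R) (q : Fin 2) :
    laplaceCore n 0 e d 1 q = 0 := by
  fin_cases q <;> simp [laplaceCore]

theorem laplaceCore_last_apply_one (n : ℕ) (e d : R) (p : Fin 2) :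
    laplaceCore n (Fin.last (n + 1)) e d p 1 = 0 := by
  fin_cases p <;> simp [laplaceCore]

theorem prod_laplaceCore_eq_zero (n : ℕ) (e d : Fin (n + 2) → R) (γ : Fin (n + 3) → Fin 2)
    (hγ : ∃ j, laplaceRank n j ≤ γ j) :
    ∏ i, laplaceCore n i (e i) (d i) (γ i.castSucc) (γ i.succ) = 0 := by
  obtain ⟨j, hj⟩ := hγ
  have hγj_lt := (γ j).2
  have hbd : (j : ℕ) = 0 ∨ (j : ℕ) = n + 2 := by
    by_contra h
    rw [laplaceRank, if_neg h] at hj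
    omega
  have hγj : γ j = 1 := by
    rw [laplaceRank, if_pos hbd] at hj
    omega
  rcases hbd with h0 | hlast
  · obtain rfl : j = 0 := Fin.ext h0
    refine prod_eq_zero (mem_univ 0) ?_
    rw [Fin.castSucc_zero, hγj]
    exact laplaceCore_zero_apply_one n _ _ _
  · obtain rfl : j = Fin.last (n + 2) := Fin.ext hlast
    refine prod_eq_zero (mem_univ (Fin.last (n + 1))) ?_
    rw [Fin.succ_last, hγj]
    exact laplaceCore_last_apply_one n _ _ _

theorem row_mul_prod_mul_col_eq_sum_paths (n : ℕ) (e d : Fin (n + 2) → R) :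
    (!![d 0, e 0] *
      (List.ofFn fun m : Fin n =>
        !![e m.succ.castSucc, 0; d m.succ.castSucc, e m.succ.castSucc]).prod *
      !![e (Fin.last (n + 1)); d (Fin.last (n + 1))]) 0 0
      = ∑ β : ∀ j, Fin (laplaceRank n j), ∏ i, laplaceCore n i (e i) (d i)
          (Fin.castLE (laplaceRank_le_two n _) (β i.castSucc))
          (Fin.castLE (laplaceRank_le_two n _) (β i.succ)) := by
  rw [sum_pi_castLE_eq_sum (laplaceRank_le_two n)
      (fun γ => ∏ i, laplaceCore n i (e i) (d i) (γ i.castSucc) (γ i.succ))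
      (prod_laplaceCore_eq_zero n e d)]
  have hpaths := sum_paths_eq_dotProduct_list_prod_mulVec
    (fun i => laplaceCore n i (e i) (d i)) 1 1
  simp only [Pi.one_apply, one_mul, mul_one] at hpaths
  rw [hpaths, list_prod_laplaceCore_eq]
  simp [dotProduct, mulVec, vecMul, Matrix.mul_apply, Fin.sum_univ_two]

end

/-- **Rank-2 TT decomposition of the Laplace-like sum**
`H = Σ_m E ⊗ ⋯ ⊗ E ⊗ D_m ⊗ E ⊗ ⋯ ⊗ E` (cf. Section 4.2 of the paper).
The dimension is `d = n + 2 ≥ 2`, positions are 0-based. `H` equals the unique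
entry of the product of the explicit rank-2 cores, and in particular admits a
TT representation with all (interior) ranks equal to 2. -/
theorem laplace_like_sum_rank_two {R : Type*} [CommRing R] (n : ℕ)
    (α : Fin (n + 2) → Type*)
    (E : ∀ k : Fin (n + 2), α k → R) (D : ∀ k : Fin (n + 2), α k → R)
    (H : (∀ i, α i) → R)
    (hH : ∀ x : ∀ i, α i,
      H x = ∑ m : Fin (n + 2),
        (∏ k ∈ Finset.univ.filter (fun k : Fin (n + 2) => (k : ℕ) < (m : ℕ)), E k (x k))
        * D m (x m)
        * ∏ k ∈ Finset.univ.filter (fun k : Fin (n + 2) => (m : ℕ) < (k : ℕ)), E k (x k)) :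
    (∀ x : ∀ i, α i,
      H x = (!![D 0 (x 0), E 0 (x 0)] *
             (List.ofFn (fun m : Fin n =>
               !![E m.succ.castSucc (x m.succ.castSucc), 0;
                  D m.succ.castSucc (x m.succ.castSucc),
                  E m.succ.castSucc (x m.succ.castSucc)])).prod *
             !![E (Fin.last (n + 1)) (x (Fin.last (n + 1)));
                D (Fin.last (n + 1)) (x (Fin.last (n + 1)))]) 0 0)
    ∧ IsTTRep H (fun j : Fin (n + 3) => if (j : ℕ) = 0 ∨ (j : ℕ) = n + 2 then 1 else 2) := by
  have hmatrix (x : ∀ i, α i) := (hH x).trans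
    (sum_filter_prod_eq_row_mul_prod_mul_col n (fun k => E k (x k)) (fun k => D k (x k)))
  refine ⟨hmatrix, by simp, by simp,
    fun i y p q => laplaceCore n i (E i y) (D i y)
      (Fin.castLE (laplaceRank_le_two n _) p) (Fin.castLE (laplaceRank_le_two n _) q),
    fun x => (hmatrix x).trans
      (row_mul_prod_mul_col_eq_sum_paths n (fun k => E k (x k)) (fun k => D k (x k)))⟩
end

section
/- Let R be a commutative ring, L ≥ 2, and p ∈ ℕ. The function f : (Fin 2)^L → R defined by f(x_1,…,x_L) = (Σ_{l=1}^L (x_l : R)·2^{l-1})^p admits a TT representation with all ranks at most p + 1. (This is the rank-(p+1) QTT representation of a sampled monomial x^p.) -/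
open scoped BigOperators

/-!
Write `x = Σ_l t_l` with `t_l = x_l 2^l`. The Pascal matrices `P(t)_{ab} = C(b,a) t^(b-a)`,
`0 ≤ a, b ≤ p`, satisfy `(s^a)_a ⬝ P(t) = ((s+t)^b)_b` by the binomial theorem, so row `0` of
`P(t_1) ⋯ P(t_L)` is `((Σ_l t_l)^b)_b` and its entry `p` is `x^p`. An entry `(a, b)` of a product
of `L` square `N × N` matrices is a TT representation with ranks `1, N, …, N, 1`: the first and
last cores are row `a` of the first factor and column `b` of the last one.
-/

namespace Matrix

variable {R : Type*} [CommRing R]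

def pascal (N : ℕ) (t : R) : Matrix (Fin N) (Fin N) R :=
  of fun a b => ((b : ℕ).choose a : R) * t ^ ((b : ℕ) - a)

theorem powers_vecMul_pascal (N : ℕ) (s t : R) :
    (fun a : Fin N => s ^ (a : ℕ)) ᵥ* pascal N t = fun b : Fin N => (s + t) ^ (b : ℕ) := by
  funext b
  simp only [vecMul, dotProduct, pascal, of_apply]
  rw [add_pow,
    Fin.sum_univ_eq_sum_range (fun a => s ^ a * (((b : ℕ).choose a : R) * t ^ ((b : ℕ) - a)))]
  refine (Finset.sum_subset (Finset.range_subset_range.2 b.isLt) fun a _ ha => ?_).symm.trans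
    (Finset.sum_congr rfl fun a _ => by ring)
  rw [Nat.choose_eq_zero_of_lt (by simpa using ha), Nat.cast_zero, zero_mul, mul_zero]

theorem powers_vecMul_list_prod_pascal (N : ℕ) (s : R) (l : List R) :
    (fun a : Fin N => s ^ (a : ℕ)) ᵥ* (l.map (pascal N)).prod
      = fun b : Fin N => (s + l.sum) ^ (b : ℕ) := by
  induction l generalizing s with
  | nil => simp
  | cons t l ih =>
    rw [List.map_cons, List.prod_cons, ← vecMul_vecMul, powers_vecMul_pascal, ih, List.sum_cons,
      add_assoc]

theorem list_prod_ofFn_pascal_zero_apply {L : ℕ} (N : ℕ) (t : Fin L → R) (b : Fin (N + 1)) :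
    (List.ofFn fun i => pascal (N + 1) (t i)).prod 0 b = (∑ i, t i) ^ (b : ℕ) := by
  have h := congrFun (powers_vecMul_list_prod_pascal (N + 1) 0 (List.ofFn t)) b
  rwa [zero_add, vecMul, dotProduct, Fin.sum_univ_succ, Finset.sum_eq_zero (fun a _ => by simp),
    add_zero, Fin.val_zero, pow_zero, one_mul, List.map_ofFn, List.sum_ofFn] at h

theorem list_prod_ofFn_apply_s14 {N m : ℕ} (M : Fin (m + 1) → Matrix (Fin N) (Fin N) R)
    (a b : Fin N) :
    (List.ofFn M).prod a b = ∑ γ : Fin m → Fin N,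
      ∏ i, M i ((Fin.cons a (Fin.snoc γ b) : Fin (m + 2) → Fin N) i.castSucc)
        ((Fin.cons a (Fin.snoc γ b) : Fin (m + 2) → Fin N) i.succ) := by
  induction m generalizing a with
  | zero => simp [Fin.snoc]
  | succ m ih =>
    rw [List.ofFn_succ, List.prod_cons, mul_apply,
      ← (Fin.consEquiv fun _ : Fin (m + 1) => Fin N).sum_comp, Fintype.sum_prod_type]
    refine Finset.sum_congr rfl fun c _ => ?_
    rw [ih, Finset.mul_sum]
    refine Finset.sum_congr rfl fun γ _ => ?_
    conv_rhs => rw [Fin.prod_univ_succ]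
    simp only [Fin.consEquiv, Equiv.coe_fn_mk, ← Fin.cons_snoc_eq_snoc_cons, Fin.castSucc_zero,
      Fin.cons_zero, Fin.cons_succ, ← Fin.succ_castSucc]

end Matrix

section SquareTT

variable {m N : ℕ}

def squareTTRanks (m N : ℕ) : Fin (m + 2) → ℕ :=
  Fin.cons 1 (Fin.snoc (fun _ : Fin m => N) 1)

theorem squareTTRanks_zero : squareTTRanks m N 0 = 1 := rfl

theorem squareTTRanks_succ_last : squareTTRanks m N (Fin.last m).succ = 1 := by
  simp [squareTTRanks]

theorem squareTTRanks_castSucc_succ (k : Fin m) : squareTTRanks m N k.castSucc.succ = N := by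
  simp [squareTTRanks]

theorem squareTTRanks_le (hN : 1 ≤ N) (j : Fin (m + 2)) : squareTTRanks m N j ≤ N := by
  induction j using Fin.cases with
  | zero => exact hN
  | succ j => induction j using Fin.lastCases <;> simp [squareTTRanks, hN]

def squareTTPathEquiv (m N : ℕ) : (Fin m → Fin N) ≃ ∀ j, Fin (squareTTRanks m N j) where
  toFun γ := Fin.cons (α := fun j => Fin (squareTTRanks m N j))
    ((0 : Fin 1).cast squareTTRanks_zero.symm) <|
      Fin.snoc (α := fun k => Fin (squareTTRanks m N k.succ))
        (fun k => (γ k).cast (squareTTRanks_castSucc_succ k).symm)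
        ((0 : Fin 1).cast squareTTRanks_succ_last.symm)
  invFun β k := (β k.castSucc.succ).cast (squareTTRanks_castSucc_succ k)
  left_inv γ := by
    ext k
    simp only [Fin.cons_succ, Fin.snoc_castSucc, Fin.val_cast]
  right_inv β := by
    funext j
    induction j using Fin.cases with
    | zero =>
      have := (β 0).isLt.trans_eq squareTTRanks_zero
      ext; simp only [Fin.cons_zero, Fin.val_cast]; omega
    | succ j =>
      induction j using Fin.lastCases with
      | last =>
        have := (β (Fin.last m).succ).isLt.trans_eq squareTTRanks_succ_last
        ext; simp only [Fin.cons_succ, Fin.snoc_last, Fin.val_cast]; omega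
      | cast k => ext; simp only [Fin.cons_succ, Fin.snoc_castSucc, Fin.val_cast]

def squareTTBond (a b : Fin N) : ∀ j : Fin (m + 2), Fin (squareTTRanks m N j) → Fin N :=
  Fin.cons (α := fun j => Fin (squareTTRanks m N j) → Fin N) (fun _ => a) <|
    Fin.lastCases (motive := fun k => Fin (squareTTRanks m N k.succ) → Fin N) (fun _ => b)
      fun k s => s.cast (squareTTRanks_castSucc_succ k)

theorem squareTTBond_squareTTPathEquiv (a b : Fin N) (γ : Fin m → Fin N) (j : Fin (m + 2)) :
    squareTTBond a b j (squareTTPathEquiv m N γ j)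
      = (Fin.cons a (Fin.snoc γ b) : Fin (m + 2) → Fin N) j := by
  induction j using Fin.cases with
  | zero => rfl
  | succ j =>
    induction j using Fin.lastCases <;>
      simp only [squareTTBond, squareTTPathEquiv, Equiv.coe_fn_mk, Fin.cons_succ,
        Fin.snoc_castSucc, Fin.snoc_last, Fin.lastCases_last, Fin.lastCases_castSucc,
        Fin.cast_cast, Fin.cast_eq_self]

theorem isTTRep_list_prod_ofFn_apply {R : Type*} [CommRing R] {α : Fin (m + 1) → Type*}
    (M : ∀ i, α i → Matrix (Fin N) (Fin N) R) (a b : Fin N) :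
    IsTTRep (fun x => (List.ofFn fun i => M i (x i)).prod a b) (squareTTRanks m N) := by
  refine ⟨squareTTRanks_zero, by rw [← Fin.succ_last]; exact squareTTRanks_succ_last,
    fun i y => (M i y).submatrix (squareTTBond a b i.castSucc) (squareTTBond a b i.succ),
    fun x => ?_⟩
  dsimp only
  rw [Matrix.list_prod_ofFn_apply_s14, ← (squareTTPathEquiv m N).sum_comp]
  simp only [Matrix.submatrix_apply, squareTTBond_squareTTPathEquiv]

end SquareTT

/-- **Rank-(p+1) QTT representation of a sampled monomial**: the function
`x ↦ x^p` sampled at `x = Σ_l x_l 2^(l-1)`, `x_l ∈ {0,1}`, `L = n + 2 ≥ 2`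
binary digits, admits a TT representation with all ranks at most `p + 1`. -/
theorem qtt_monomial_rank_le (R : Type*) [CommRing R] (n p : ℕ) :
    ∃ r : Fin (n + 3) → ℕ, (∀ j, r j ≤ p + 1) ∧
      IsTTRep (fun x : Fin (n + 2) → Fin 2 =>
        (∑ l : Fin (n + 2), ((x l : ℕ) : R) * 2 ^ (l : ℕ)) ^ p) r := by
  refine ⟨squareTTRanks (n + 1) (p + 1), squareTTRanks_le (Nat.le_add_left 1 p), ?_⟩
  convert isTTRep_list_prod_ofFn_apply
    (fun (l : Fin (n + 2)) (y : Fin 2) => Matrix.pascal (p + 1) (((y : ℕ) : R) * 2 ^ (l : ℕ)))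
    0 (Fin.last p) using 2 with x
  exact (Matrix.list_prod_ofFn_pascal_zero_apply p _ (Fin.last p)).symm
end

section
/- Let R be a commutative ring, d ≥ 2, and let α_1,…,α_d be types. Let E_k : α_k → R for k = 1,…,d, let F : α_1 → R, and for each i = 2,…,d let ρ_i ∈ ℕ be positive and let A_{i,β} : α_{i-1} → R and B_{i,β} : α_i → R for β = 1,…,ρ_i. Define the generalized cascadic sum H(x_1,…,x_d) = F(x_1)·∏_{k=2}^d E_k(x_k) + Σ_{i=2}^d (∏_{k=1}^{i-2} E_k(x_k)) · (Σ_{β=1}^{ρ_i} A_{i,β}(x_{i-1})·B_{i,β}(x_i)) · (∏_{k=i+1}^d E_k(x_k)). Then H admits a TT representation whose rank at position i equals 2 + ρ_{i+1} for i = 1,…,d−1, where ρ_{d+1} := 1. -/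
/-!
`H` is computed by a weighted automaton reading `x 0, x 1, …` from left to right. Its states
are `idle` (only `E`-factors read so far), `pending j β` (the pair term `j` was opened by
`A j β` at position `j` and waits for `B j β` at position `j + 1`) and `done` (a complete term
has been accumulated and is continued by `E`-factors). Before position `s` only `idle`, `done`
and the `ρ (s - 1)` states `pending (s - 1) β` can carry weight, so restricting the bond at `s`
to these states gives rank `2 + ρ (s - 1)`, and rank `1` at both ends. The cores are the
transition matrices of the automaton, and the TT path sum collapses to the forward recursion
of the state weights.
-/

open scoped BigOperators

open Finset

theorem sum_pi_mul_prod_eq_of_transfer {R : Type*} [CommSemiring R] {d : ℕ}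
    {ι : Fin (d + 1) → Type*} [∀ s, Fintype (ι s)]
    (M : ∀ i : Fin d, ι i.castSucc → ι i.succ → R) (w : ∀ s, ι s → R)
    (hw : ∀ i b, w i.succ b = ∑ a, w i.castSucc a * M i a b) :
    ∑ β : ∀ s, ι s, w 0 (β 0) * ∏ i, M i (β i.castSucc) (β i.succ) =
      ∑ b, w (Fin.last d) b := by
  induction d with
  | zero =>
    simp only [univ_eq_empty, prod_empty, mul_one]
    exact Fintype.sum_equiv (Equiv.piUnique (α := Fin 1) ι) _ _ fun _ => rfl
  | succ d ih =>
    rw [← (Fin.consEquiv ι).sum_comp, Fintype.sum_prod_type, sum_comm]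
    simp only [Fin.consEquiv_apply, Fin.prod_univ_succ, Fin.cons_zero, Fin.castSucc_zero,
      ← Fin.succ_castSucc, Fin.cons_succ]
    refine Eq.trans (sum_congr rfl fun β _ => ?_)
      (ih (ι := fun s => ι s.succ) (fun i => M i.succ) (fun s => w s.succ) fun i b => hw i.succ b)
    rw [hw 0, sum_mul]
    exact sum_congr rfl fun a _ => (mul_assoc _ _ _).symm

theorem IsTTRep.of_bonds {R : Type*} [CommRing R] {d : ℕ} {α : Fin d → Type*}
    {f : (∀ i, α i) → R} {r : Fin (d + 1) → ℕ} (h0 : r 0 = 1) (hd : r (Fin.last d) = 1)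
    (ι : Fin (d + 1) → Type*) [∀ s, Fintype (ι s)] (hι : ∀ s, Fintype.card (ι s) = r s)
    (G : ∀ i, α i → ι i.castSucc → ι i.succ → R)
    (hf : ∀ x, f x = ∑ β : ∀ s, ι s, ∏ i, G i (x i) (β i.castSucc) (β i.succ)) :
    IsTTRep f r := by
  let e s : ι s ≃ Fin (r s) := Fintype.equivFinOfCardEq (hι s)
  refine ⟨h0, hd, fun i xi => Matrix.of fun a b => G i xi ((e _).symm a) ((e _).symm b),
    fun x => ?_⟩
  rw [hf x, ← (Equiv.piCongrRight e).symm.sum_comp]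
  rfl

theorem IsTTRep.of_transfer {R : Type*} [CommRing R] {d : ℕ} {α : Fin d → Type*}
    {f : (∀ i, α i) → R} {r : Fin (d + 1) → ℕ} (h0 : r 0 = 1) (hd : r (Fin.last d) = 1)
    (ι : Fin (d + 1) → Type*) [∀ s, Fintype (ι s)] (hι : ∀ s, Fintype.card (ι s) = r s)
    (G : ∀ i, α i → ι i.castSucc → ι i.succ → R)
    (w : (∀ i, α i) → ∀ s, ι s → R)
    (hw₀ : ∀ x a, w x 0 a = 1)
    (hw : ∀ x i b, w x i.succ b = ∑ a, w x i.castSucc a * G i (x i) a b)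
    (hf : ∀ x, f x = ∑ b, w x (Fin.last d) b) :
    IsTTRep f r :=
  IsTTRep.of_bonds h0 hd ι hι G fun x => by
    rw [hf, ← sum_pi_mul_prod_eq_of_transfer _ _ (hw x)]
    simp only [hw₀, one_mul]

inductive CascadeState {n : ℕ} (ρ : Fin (n + 1) → ℕ)
  | idle
  | pending (j : Fin (n + 1)) (β : Fin (ρ j))
  | done

namespace CascadeState

variable {n : ℕ} (ρ : Fin (n + 1) → ℕ)

def equivSum : CascadeState ρ ≃ Unit ⊕ (Σ j, Fin (ρ j)) ⊕ Unit where
  toFun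
    | idle => .inl ()
    | pending j β => .inr (.inl ⟨j, β⟩)
    | done => .inr (.inr ())
  invFun
    | .inl _ => idle
    | .inr (.inl ⟨j, β⟩) => pending j β
    | .inr (.inr _) => done
  left_inv σ := by cases σ <;> rfl
  right_inv τ := by rcases τ with _ | ⟨j, β⟩ | _ <;> rfl

instance : Fintype (CascadeState ρ) := Fintype.ofEquiv _ (equivSum ρ).symm

variable {ρ}

theorem sum_eq {M : Type*} [AddCommMonoid M] (g : CascadeState ρ → M) :
    ∑ σ, g σ = g idle + ∑ j, ∑ β, g (pending j β) + g done := by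
  rw [← (equivSum ρ).symm.sum_comp]
  simp [Fintype.sum_sum_type, Fintype.sum_sigma, equivSum, add_assoc]

abbrev IsLive (s : ℕ) : CascadeState ρ → Prop
  | idle => s < n + 2
  | pending j _ => (j : ℕ) + 1 = s
  | done => 0 < s

instance (s : ℕ) : DecidablePred (IsLive (ρ := ρ) s)
  | idle | pending _ _ | done => by unfold IsLive; infer_instance

theorem card_isLive (s : Fin (n + 3)) :
    Fintype.card {σ : CascadeState ρ // σ.IsLive s} =
      if h : 0 < (s : ℕ) ∧ (s : ℕ) < n + 2 then
        2 + ρ ⟨(s : ℕ) - 1, Nat.sub_one_lt_of_le h.1 (Nat.le_of_lt_succ h.2)⟩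
      else 1 := by
  have hpending : ∑ j : Fin (n + 1), ∑ _β : Fin (ρ j), (if (j : ℕ) + 1 = s then 1 else 0) =
      if h : 0 < (s : ℕ) ∧ (s : ℕ) < n + 2 then ρ ⟨(s : ℕ) - 1, by omega⟩ else 0 := by
    split_ifs with h
    · rw [Fintype.sum_eq_single ⟨(s : ℕ) - 1, by omega⟩ fun j hj =>
        sum_eq_zero fun β _ => if_neg fun hjs => hj (Fin.ext (by simp only; omega))]
      simp [show (s : ℕ) - 1 + 1 = s by omega]
    · exact sum_eq_zero fun j _ => sum_eq_zero fun β _ => if_neg (by omega)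
  rw [Fintype.card_subtype, card_filter, sum_eq]
  simp only [IsLive, hpending]
  split_ifs <;> omega

theorem eq_done_of_isLive_last {σ : CascadeState ρ} (hσ : σ.IsLive (n + 2)) : σ = done := by
  cases σ with
  | idle => exact absurd hσ (lt_irrefl _)
  | pending j _ =>
    have : (j : ℕ) + 1 = n + 2 := hσ
    omega
  | done => rfl

end CascadeState

section Cascade

variable {R : Type*} [CommSemiring R] {n : ℕ} {α : Fin (n + 2) → Type*}
  (E : ∀ k, α k → R) (F : α 0 → R) {ρ : Fin (n + 1) → ℕ}
  (A : ∀ j : Fin (n + 1), Fin (ρ j) → α j.castSucc → R)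
  (B : ∀ j : Fin (n + 1), Fin (ρ j) → α j.succ → R) (x : ∀ i, α i)

def prodIco (lo hi : ℕ) : R :=
  ∏ k ∈ univ.filter (fun k : Fin (n + 2) => lo ≤ k ∧ k < hi), E k (x k)

theorem prodIco_of_le {lo hi : ℕ} (h : hi ≤ lo) : prodIco E x lo hi = 1 :=
  prod_eq_one fun k hk => by rw [mem_filter] at hk; omega

theorem prodIco_succ {lo : ℕ} (p : Fin (n + 2)) (h : lo ≤ p) :
    prodIco E x lo (p + 1) = prodIco E x lo p * E p (x p) := by
  have : univ.filter (fun k : Fin (n + 2) => lo ≤ k ∧ (k : ℕ) < p + 1) =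
      insert p (univ.filter fun k : Fin (n + 2) => lo ≤ k ∧ k < p) := by
    ext k; simp only [mem_filter, mem_univ, true_and, mem_insert, Fin.ext_iff]; omega
  rw [prodIco, this, prod_insert (by simp), mul_comm]
  rfl

def pairSum (j : Fin (n + 1)) : R := ∑ β, A j β (x j.castSucc) * B j β (x j.succ)

def cascadeTerm : Fin (n + 2) → R :=
  Fin.cases (F (x 0)) fun j => prodIco E x 0 j * pairSum A B x j

def partialCascadicSum (s : ℕ) : R :=
  ∑ p ∈ univ.filter (fun p : Fin (n + 2) => (p : ℕ) < s),
    cascadeTerm E F A B x p * prodIco E x (p + 1) s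

theorem partialCascadicSum_zero : partialCascadicSum E F A B x 0 = 0 :=
  sum_eq_zero fun p hp => by simp at hp

theorem partialCascadicSum_succ (p : Fin (n + 2)) :
    partialCascadicSum E F A B x (p + 1) =
      partialCascadicSum E F A B x p * E p (x p) + cascadeTerm E F A B x p := by
  have : univ.filter (fun q : Fin (n + 2) => (q : ℕ) < p + 1) =
      insert p (univ.filter fun q : Fin (n + 2) => (q : ℕ) < p) := by
    ext q; simp only [mem_filter, mem_univ, true_and, mem_insert, Fin.ext_iff]; omega
  rw [partialCascadicSum, this, sum_insert (by simp), prodIco_of_le E x le_rfl, mul_one, add_comm,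
    partialCascadicSum, sum_mul]
  congr 1
  refine sum_congr rfl fun q hq => ?_
  rw [prodIco_succ E x p (by simpa using hq), mul_assoc]

theorem partialCascadicSum_last :
    partialCascadicSum E F A B x (n + 2) =
      F (x 0) * ∏ k ∈ univ.filter (fun k : Fin (n + 2) => 1 ≤ (k : ℕ)), E k (x k) +
        ∑ j : Fin (n + 1),
          (∏ k ∈ univ.filter (fun k : Fin (n + 2) => (k : ℕ) < (j : ℕ)), E k (x k)) *
            (∑ β : Fin (ρ j), A j β (x j.castSucc) * B j β (x j.succ)) *
            ∏ k ∈ univ.filter (fun k : Fin (n + 2) => (j : ℕ) + 1 < (k : ℕ)),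
              E k (x k) := by
  rw [partialCascadicSum, filter_true_of_mem fun p _ => p.isLt, Fin.sum_univ_succ]
  simp only [cascadeTerm, Fin.cases_zero, Fin.cases_succ, prodIco, pairSum, Fin.val_succ,
    Fin.val_zero]
  congr 1
  · congr 1
    exact prod_congr (filter_congr fun k _ => by omega) fun _ _ => rfl
  · refine sum_congr rfl fun j _ => ?_
    congr 1
    · congr 1
      exact prod_congr (filter_congr fun k _ => by omega) fun _ _ => rfl
    · exact prod_congr (filter_congr fun k _ => by omega) fun _ _ => rfl

def cascadeWeight (s : ℕ) : CascadeState ρ → R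
  | .idle => prodIco E x 0 s
  | .pending j β => if (j : ℕ) + 1 = s then prodIco E x 0 j * A j β (x j.castSucc) else 0
  | .done => partialCascadicSum E F A B x s

def cascadeCore (p : Fin (n + 2)) (xp : α p) : CascadeState ρ → CascadeState ρ → R
  | .idle, .idle => E p xp
  | .idle, .pending j β => if h : j.castSucc = p then A j β (h ▸ xp) else 0
  | .idle, .done => if h : p = 0 then F (h ▸ xp) else 0
  | .pending j β, .done => if h : j.succ = p then B j β (h ▸ xp) else 0
  | .done, .done => E p xp
  | _, _ => 0

theorem sum_cascadeWeight_mul_cascadeCore (p : Fin (n + 2)) (τ : CascadeState ρ) :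
    ∑ σ, cascadeWeight E F A B x p σ * cascadeCore E F A B p (x p) σ τ =
      cascadeWeight E F A B x (p + 1) τ := by
  rw [CascadeState.sum_eq]
  cases τ with
  | idle => simp [cascadeWeight, cascadeCore, prodIco_succ]
  | pending j β =>
    by_cases h : j.castSucc = p
    · subst h
      simp [cascadeWeight, cascadeCore]
    · have : (j : ℕ) ≠ p := fun h' => h (Fin.ext h')
      simp [cascadeWeight, cascadeCore, h, this]
  | done =>
    change _ = partialCascadicSum E F A B x (p + 1)
    rw [partialCascadicSum_succ]
    cases p using Fin.cases with
    | zero => simp [cascadeWeight, cascadeCore, cascadeTerm, prodIco_of_le, partialCascadicSum_zero]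
    | succ i =>
      rw [Fintype.sum_eq_single i fun j hj => sum_eq_zero fun β _ => by
        simp [cascadeCore, Fin.succ_inj, hj]]
      simp [cascadeWeight, cascadeCore, cascadeTerm, pairSum, mul_sum, mul_assoc, add_comm]

theorem cascadeWeight_zero_of_isLive {σ : CascadeState ρ} (hσ : σ.IsLive 0) :
    cascadeWeight E F A B x 0 σ = 1 := by
  cases σ with
  | idle => exact prodIco_of_le E x le_rfl
  | pending j _ => exact absurd hσ (Nat.succ_ne_zero _)
  | done => exact absurd hσ (lt_irrefl _)

theorem cascadeWeight_eq_zero_of_not_isLive {s : ℕ} (hs : s < n + 2) {σ : CascadeState ρ}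
    (hσ : ¬σ.IsLive s) : cascadeWeight E F A B x s σ = 0 := by
  cases σ with
  | idle => exact absurd hs hσ
  | pending j β => exact if_neg hσ
  | done =>
    obtain rfl : s = 0 := Nat.eq_zero_of_not_pos hσ
    exact partialCascadicSum_zero E F A B x

theorem sum_isLive_cascadeWeight_mul {s : ℕ} (hs : s < n + 2) (g : CascadeState ρ → R) :
    ∑ σ : {σ : CascadeState ρ // σ.IsLive s}, cascadeWeight E F A B x s σ * g σ =
      ∑ σ, cascadeWeight E F A B x s σ * g σ := by
  rw [← Fintype.sum_subtype_add_sum_subtype (CascadeState.IsLive s),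
    Fintype.sum_eq_zero (fun σ : {σ : CascadeState ρ // ¬σ.IsLive s} => _) fun σ => by
      rw [cascadeWeight_eq_zero_of_not_isLive E F A B x hs σ.2, zero_mul], add_zero]

end Cascade

-- Positions are 0-based: the pair term `j` is the paper's term `i = j + 2`.
/-- **TT ranks of the generalized cascadic sum** (Remark 4.4 of the paper).
The dimension is `d = n + 2 ≥ 2`; positions are 0-based, and the pair term
indexed by `j : Fin (n + 1)` (NL index `i = j + 2`) acts on the adjacent
positions `j.castSucc`, `j.succ` and is itself a sum of `ρ j` separable
components.  `H` admits a TT representation whose rank at the interior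
separator position `s = 1, …, d-1` equals `2 + ρ (s - 1)` (in the 1-based
notation of the paper, the rank at position `i` equals `2 + ρ_{i+1}`). -/
theorem generalized_cascadic_sum_tt_ranks {R : Type*} [CommRing R] (n : ℕ)
    (α : Fin (n + 2) → Type*)
    (E : ∀ k : Fin (n + 2), α k → R) (F : α 0 → R)
    (ρ : Fin (n + 1) → ℕ)
    (A : ∀ j : Fin (n + 1), Fin (ρ j) → α j.castSucc → R)
    (B : ∀ j : Fin (n + 1), Fin (ρ j) → α j.succ → R)
    (H : (∀ i, α i) → R)
    (hH : ∀ x : ∀ i, α i,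
      H x = F (x 0) *
              ∏ k ∈ Finset.univ.filter (fun k : Fin (n + 2) => 1 ≤ (k : ℕ)), E k (x k)
          + ∑ j : Fin (n + 1),
              (∏ k ∈ Finset.univ.filter (fun k : Fin (n + 2) => (k : ℕ) < (j : ℕ)), E k (x k))
              * (∑ β : Fin (ρ j), A j β (x j.castSucc) * B j β (x j.succ))
              * ∏ k ∈ Finset.univ.filter (fun k : Fin (n + 2) => (j : ℕ) + 1 < (k : ℕ)),
                  E k (x k)) :
    IsTTRep H (fun s : Fin (n + 3) =>
      if h : 0 < (s : ℕ) ∧ (s : ℕ) < n + 2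
      then 2 + ρ ⟨(s : ℕ) - 1, by omega⟩ else 1) := by
  refine IsTTRep.of_transfer (dif_neg (by simp)) (dif_neg (by simp))
    (fun s => {σ : CascadeState ρ // σ.IsLive s}) CascadeState.card_isLive
    (fun i xi σ τ => cascadeCore E F A B i xi σ τ) (fun x s σ => cascadeWeight E F A B x s σ)
    ?_ ?_ ?_
  · exact fun x σ => cascadeWeight_zero_of_isLive E F A B x σ.2
  · intro x i τ
    simp only [Fin.val_castSucc, Fin.val_succ]
    rw [sum_isLive_cascadeWeight_mul E F A B x i.isLt (cascadeCore E F A B i (x i) · τ),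
      sum_cascadeWeight_mul_cascadeCore]
  · intro x
    change H x =
      ∑ σ : {σ : CascadeState ρ // σ.IsLive (n + 2)}, cascadeWeight E F A B x (n + 2) σ
    rw [Fintype.sum_eq_single ⟨.done, Nat.succ_pos _⟩ fun σ hσ =>
      absurd (Subtype.ext (CascadeState.eq_done_of_isLive_last σ.2)) hσ, hH x,
      ← partialCascadicSum_last]
    rfl
end
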